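/- arXiv:0910.0547 — 6 statements merged into one kernel-verified Lean document; each statement's English description precedes it below -/
import Mathlib

section
/- Let n ∈ ℕ and let B, B' ∈ A_n be adjacency matrices of two multigraphs on n vertices. If t_≤(A,B) = t_≤(A,B') for every k ∈ ℕ and every A ∈ A_k, then the two multigraphs are isomorphic: there exists a permutation τ of [n] such that B'(i,j) = B(τ(i),τ(j)) for all i,j ∈ [n]. -/
open scoped Classical BigOperators

/-- `A ∈ A_k`: adjacency matrix of a multigraph on `k` labeled vertices. -/
def IsAdj {k : ℕ} (A : Matrix (Fin k) (Fin k) ℕ) : Prop :=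
  (∀ i j, A i j = A j i) ∧ ∀ i, Even (A i i)

/-- Homomorphism density
`t_≤(A,B) = n^{−k} ∑_{φ:[k]→[n]} 1[∀ i,j : A(i,j) ≤ B(φ(i),φ(j))]`. -/
noncomputable def homDensity {k n : ℕ} (A : Matrix (Fin k) (Fin k) ℕ)
    (B : Matrix (Fin n) (Fin n) ℕ) : ℝ :=
  (1 / (n : ℝ) ^ k) *
    ∑ φ : Fin k → Fin n, (if ∀ i j, A i j ≤ B (φ i) (φ j) then (1 : ℝ) else 0)

/-!
Up to the factor `n ^ k`, `t_≤(A, B)` counts the maps `φ` with `A ≤ B ∘ φ` entrywise. This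
count is the sum, over the finitely many patterns `E = B ∘ ψ` or `B' ∘ ψ` with `A ≤ E`, of the
number of maps with `B ∘ φ = E` exactly; downward induction over these patterns (Möbius
inversion) shows that the exact counts agree for `B` and `B'`. A map with `B ∘ φ = C` that
identifies a new vertex `a` with an earlier vertex `i` forces `a` and `i` to be twins in `C`,
and is then a map for `C` with `a` deleted; inclusion–exclusion over these coincidences shows
that the numbers of injective such maps agree as well. For `C = B'` the identity is one, so
some injective, hence bijective, `φ` has `B ∘ φ = B'`.
-/

open Finset

theorem Finset.eqOn_of_sum_filter_le_eq {X M : Type*} [PartialOrder X] [AddCancelCommMonoid M]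
    {t : Finset X} {f g : X → M}
    (h : ∀ x ∈ t, ∑ y ∈ t with x ≤ y, f y = ∑ y ∈ t with x ≤ y, g y) : Set.EqOn f g t := by
  intro x hx
  refine t.wellFoundedOn.induction (r := (· > ·)) hx (P := fun x => f x = g x) fun x hx ih => ?_
  have split (k : X → M) : ∑ y ∈ t with x ≤ y, k y = k x + ∑ y ∈ t with x < y, k y := by
    rw [← add_sum_erase _ _ (mem_filter.2 ⟨hx, le_rfl⟩)]
    congr 2
    ext y
    simp only [mem_erase, mem_filter, lt_iff_le_and_ne]
    tauto
  have hgt : ∑ y ∈ t with x < y, f y = ∑ y ∈ t with x < y, g y :=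
    sum_congr rfl fun y hy => ih y (mem_filter.1 hy).1 (mem_filter.1 hy).2
  have := h x hx
  rw [split f, split g, hgt] at this
  exact add_right_cancel this

section Homs

variable {α β γ : Type*} [Fintype α] [Fintype β] [Fintype γ]

noncomputable def leHoms (C : Matrix α α ℕ) (B : Matrix β β ℕ) : Finset (α → β) :=
  {φ | ∀ i j, C i j ≤ B (φ i) (φ j)}

noncomputable def eqHoms (C : Matrix α α ℕ) (B : Matrix β β ℕ) : Finset (α → β) :=
  {φ | B.submatrix φ φ = C}

@[simp]
theorem mem_leHoms {C : Matrix α α ℕ} {B : Matrix β β ℕ} {φ : α → β} :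
    φ ∈ leHoms C B ↔ ∀ i j, C i j ≤ B (φ i) (φ j) := by
  simp [leHoms]

@[simp]
theorem mem_eqHoms {C : Matrix α α ℕ} {B : Matrix β β ℕ} {φ : α → β} :
    φ ∈ eqHoms C B ↔ B.submatrix φ φ = C := by
  simp [eqHoms]

theorem card_leHoms_eq_sum_card_eqHoms (C : α → α → ℕ) (B : Matrix β β ℕ)
    {t : Finset (α → α → ℕ)} (ht : ∀ φ, B.submatrix φ φ ∈ t) :
    #(leHoms C B) = ∑ E ∈ t with C ≤ E, #(eqHoms E B) := by
  rw [card_eq_sum_card_fiberwise (f := fun φ => B.submatrix φ φ)]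
  · refine sum_congr rfl fun E hE => congrArg card ?_
    ext φ
    simp only [mem_filter, mem_eqHoms, and_iff_right_iff_imp]
    rintro rfl
    exact mem_leHoms.2 fun i j => (mem_filter.1 hE).2 i j
  · intro φ hφ
    exact mem_filter.2 ⟨ht φ, fun i j => mem_leHoms.1 hφ i j⟩

theorem card_eqHoms_eq_of_card_leHoms_eq {B : Matrix β β ℕ} {B' : Matrix γ γ ℕ}
    {P : Matrix α α ℕ → Prop} (hB : ∀ φ, P (B.submatrix φ φ)) (hB' : ∀ φ, P (B'.submatrix φ φ))
    (hle : ∀ C, P C → #(leHoms C B) = #(leHoms C B')) (C : Matrix α α ℕ) :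
    #(eqHoms C B) = #(eqHoms C B') := by
  -- Patterns are plain functions, so that they carry the entrywise order.
  let t : Finset (α → α → ℕ) :=
    univ.image (fun φ => B.submatrix φ φ) ∪ univ.image (fun φ => B'.submatrix φ φ)
  have htB (φ : α → β) : B.submatrix φ φ ∈ t := mem_union_left _ (mem_image_of_mem _ (mem_univ φ))
  have htB' (φ : α → γ) : B'.submatrix φ φ ∈ t :=
    mem_union_right _ (mem_image_of_mem _ (mem_univ φ))
  by_cases hC : C ∈ t
  · refine eqOn_of_sum_filter_le_eq (f := fun E : α → α → ℕ => #(eqHoms E B))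
      (g := fun E => #(eqHoms E B'))
      (fun E hE => ?_) hC
    rw [← card_leHoms_eq_sum_card_eqHoms E B htB, ← card_leHoms_eq_sum_card_eqHoms E B' htB']
    rcases mem_union.1 hE with hE | hE <;> obtain ⟨φ, -, rfl⟩ := mem_image.1 hE
    exacts [hle _ (hB φ), hle _ (hB' φ)]
  · have hBC : eqHoms C B = ∅ := filter_eq_empty_iff.2 fun φ _ hφ => hC (hφ ▸ htB φ)
    have hB'C : eqHoms C B' = ∅ := filter_eq_empty_iff.2 fun φ _ hφ => hC (hφ ▸ htB' φ)
    rw [hBC, hB'C, card_empty, card_empty]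

theorem card_leHoms_submatrix_equiv {α' : Type*} [Fintype α'] (e : α' ≃ α) (C : Matrix α α ℕ)
    (B : Matrix β β ℕ) : #(leHoms (C.submatrix e e) B) = #(leHoms C B) :=
  card_equiv (e.arrowCongr (Equiv.refl β)) fun φ => by
    simpa using e.forall₂_congr e (by simp)

end Homs

theorem IsAdj.submatrix {k n : ℕ} {B : Matrix (Fin n) (Fin n) ℕ} (hB : IsAdj B)
    (f : Fin k → Fin n) : IsAdj (B.submatrix f f) :=
  ⟨fun i j => hB.1 (f i) (f j), fun i => hB.2 (f i)⟩

theorem homDensity_eq_card_leHoms_div {k n : ℕ} (A : Matrix (Fin k) (Fin k) ℕ)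
    (B : Matrix (Fin n) (Fin n) ℕ) : homDensity A B = #(leHoms A B) / (n : ℝ) ^ k := by
  rw [homDensity, sum_boole, one_div_mul_eq_div]
  congr 3
  ext φ
  simp

theorem card_leHoms_eq_of_homDensity_eq {k n : ℕ} (hn : 0 < n) {A : Matrix (Fin k) (Fin k) ℕ}
    {B B' : Matrix (Fin n) (Fin n) ℕ} (hAB : homDensity A B = homDensity A B') :
    #(leHoms A B) = #(leHoms A B') := by
  rw [homDensity_eq_card_leHoms_div, homDensity_eq_card_leHoms_div,
    div_left_inj' (pow_ne_zero k (Nat.cast_ne_zero.2 hn.ne'))] at hAB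
  exact_mod_cast hAB

theorem card_eqHoms_eq_of_homDensity_eq {α : Type*} [Fintype α] {n : ℕ} (hn : 0 < n)
    {B B' : Matrix (Fin n) (Fin n) ℕ} (hB : IsAdj B) (hB' : IsAdj B')
    (h : ∀ (k : ℕ) (A : Matrix (Fin k) (Fin k) ℕ), IsAdj A → homDensity A B = homDensity A B')
    (C : Matrix α α ℕ) : #(eqHoms C B) = #(eqHoms C B') := by
  let e := (Fintype.equivFin α).symm
  refine card_eqHoms_eq_of_card_leHoms_eq (P := fun C => IsAdj (C.submatrix e e))
    (fun φ => hB.submatrix (φ ∘ e)) (fun φ => hB'.submatrix (φ ∘ e)) (fun C hC => ?_) C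
  rw [← card_leHoms_submatrix_equiv e C B, ← card_leHoms_submatrix_equiv e C B']
  exact card_leHoms_eq_of_homDensity_eq hn (h _ _ hC)

section Injective

variable {α β : Type*}

theorem card_filter_injOn_eq_add (s : Finset (α → β)) {T : Finset α} {a : α} (ha : a ∉ T) :
    #{φ ∈ s | Set.InjOn φ T} =
      #{φ ∈ s | Set.InjOn φ ↑(insert a T)} + ∑ i ∈ T, #{φ ∈ s | Set.InjOn φ T ∧ φ a = φ i} := by
  have hsplit : {φ ∈ s | Set.InjOn φ T} = {φ ∈ s | Set.InjOn φ ↑(insert a T)} ∪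
      T.biUnion fun i => {φ ∈ s | Set.InjOn φ T ∧ φ a = φ i} := by
    ext φ
    simp only [mem_filter, mem_union, mem_biUnion, coe_insert, Set.injOn_insert (mem_coe.not.2 ha),
      Set.mem_image, mem_coe, not_exists, not_and]
    grind
  have hdisj : Disjoint {φ ∈ s | Set.InjOn φ ↑(insert a T)}
      (T.biUnion fun i => {φ ∈ s | Set.InjOn φ T ∧ φ a = φ i}) := by
    simp only [disjoint_left, mem_filter, mem_biUnion, coe_insert,
      Set.injOn_insert (mem_coe.not.2 ha)]
    grind
  have hpair : (T : Set α).PairwiseDisjoint fun i => {φ ∈ s | Set.InjOn φ T ∧ φ a = φ i} := by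
    intro i hi j hj hij
    simp only [Function.onFun, disjoint_left, mem_filter]
    exact fun φ hφ hφ' => hij (hφ.2.1 hi hj (hφ.2.2.symm.trans hφ'.2.2))
  rw [hsplit, card_union_of_disjoint hdisj, card_biUnion hpair]

def AreTwins (C : Matrix α α ℕ) (a i : α) : Prop :=
  ∀ y, C a y = C i y ∧ C y a = C y i

theorem AreTwins.submatrix_update_id {C : Matrix α α ℕ} {a i : α} (h : AreTwins C a i) :
    C.submatrix (Function.update id a i) (Function.update id a i) = C := by
  ext x y
  by_cases hx : x = a <;> by_cases hy : y = a <;>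
    simp [hx, hy, (h _).1, (h _).2]

variable [Fintype α] [Fintype β]

theorem areTwins_of_mem_eqHoms {C : Matrix α α ℕ} {B : Matrix β β ℕ} {φ : α → β}
    (hφ : φ ∈ eqHoms C B) {a i : α} (h : φ a = φ i) : AreTwins C a i := by
  rw [mem_eqHoms] at hφ
  subst hφ
  exact fun y => ⟨by simp [h], by simp [h]⟩

noncomputable def injOnEqHoms (C : Matrix α α ℕ) (B : Matrix β β ℕ) (T : Finset α) :
    Finset (α → β) :=
  {φ ∈ eqHoms C B | Set.InjOn φ T}

/-- A map sending the twins `a` and `i` to the same vertex is determined by its restriction to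
the other vertices. -/
theorem card_eqHoms_injOn_eq_of_areTwins {C : Matrix α α ℕ} {B : Matrix β β ℕ} {T : Finset α}
    {a i : α} (hai : AreTwins C a i) (hia : i ≠ a) (ha : a ∉ T) :
    #{φ ∈ eqHoms C B | Set.InjOn φ T ∧ φ a = φ i} =
      #(injOnEqHoms (C.submatrix (↑) (↑) : Matrix {x // x ≠ a} {x // x ≠ a} ℕ) B
        (T.subtype (· ≠ a))) := by
  let r (x : α) : {x // x ≠ a} := if h : x = a then ⟨i, hia⟩ else ⟨x, h⟩
  have hr : Subtype.val ∘ r = Function.update id a i := by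
    funext x
    by_cases hx : x = a <;> simp [r, hx]
  have hne {x : α} (hx : x ∈ T) : x ≠ a := ne_of_mem_of_not_mem hx ha
  refine card_nbij' (fun φ x => φ x) (· ∘ r) ?_ ?_ ?_ ?_
  · intro φ hφ
    simp only [coe_filter, Set.mem_ofPred_eq, mem_eqHoms] at hφ
    simp only [injOnEqHoms, coe_filter, Set.mem_ofPred_eq, mem_eqHoms]
    obtain ⟨rfl, hinj, -⟩ := hφ
    refine ⟨rfl, fun x hx y hy hxy => Subtype.ext (hinj ?_ ?_ hxy)⟩
    exacts [mem_subtype.1 hx, mem_subtype.1 hy]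
  · intro ψ hψ
    simp only [injOnEqHoms, coe_filter, Set.mem_ofPred_eq, mem_eqHoms] at hψ
    simp only [coe_filter, Set.mem_ofPred_eq, mem_eqHoms]
    obtain ⟨hψ, hinj⟩ := hψ
    refine ⟨?_, fun x hx y hy hxy => ?_, by simp [r, hia]⟩
    · calc B.submatrix (ψ ∘ r) (ψ ∘ r) = (C.submatrix (↑) (↑)).submatrix r r := by rw [← hψ]; rfl
        _ = C := by rw [Matrix.submatrix_submatrix, hr, hai.submatrix_update_id]
    · simp only [Function.comp_apply, r, dif_neg (hne hx), dif_neg (hne hy)] at hxy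
      exact congrArg Subtype.val (hinj (mem_subtype.2 hx) (mem_subtype.2 hy) hxy)
  · intro φ hφ
    simp only [coe_filter, Set.mem_ofPred_eq, mem_eqHoms] at hφ
    funext x
    by_cases hx : x = a
    · subst hx; simp [r, hφ.2.2]
    · simp [r, hx]
  · intro ψ _
    funext x
    simp [r, x.2]

theorem card_injOnEqHoms_eq_add {C : Matrix α α ℕ} {B : Matrix β β ℕ} {T : Finset α} {a : α}
    (ha : a ∉ T) :
    #(injOnEqHoms C B T) = #(injOnEqHoms C B (insert a T)) + #{i ∈ T | AreTwins C a i} *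
      #(injOnEqHoms (C.submatrix (↑) (↑) : Matrix {x // x ≠ a} {x // x ≠ a} ℕ) B
        (T.subtype (· ≠ a))) := by
  rw [injOnEqHoms, injOnEqHoms, card_filter_injOn_eq_add _ ha, ← smul_eq_mul,
    ← sum_const, sum_filter]
  refine congrArg _ (sum_congr rfl fun i hi => ?_)
  split_ifs with hai
  · exact card_eqHoms_injOn_eq_of_areTwins hai (ne_of_mem_of_not_mem hi ha) ha
  · exact card_eq_zero.2 (filter_eq_empty_iff.2 fun φ hφ h => hai (areTwins_of_mem_eqHoms hφ h.2))

end Injective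

universe u

theorem card_injOnEqHoms_eq {β γ : Type*} [Fintype β] [Fintype γ] {B : Matrix β β ℕ}
    {B' : Matrix γ γ ℕ}
    (heq : ∀ (α : Type u) [Fintype α] (C : Matrix α α ℕ), #(eqHoms C B) = #(eqHoms C B'))
    {α : Type u} [Fintype α] (C : Matrix α α ℕ) (T : Finset α) :
    #(injOnEqHoms C B T) = #(injOnEqHoms C B' T) := by
  obtain ⟨m, hm⟩ : ∃ m, #T = m := ⟨_, rfl⟩
  induction m generalizing α with
  | zero =>
    rw [card_eq_zero.1 hm]
    simpa [injOnEqHoms] using heq α C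
  | succ m ih =>
    obtain ⟨a, T, ha, rfl, hT⟩ := card_eq_succ.1 hm
    have hT' : #(T.subtype (· ≠ a)) = m := by
      rw [card_subtype, filter_true_of_mem fun x hx => ne_of_mem_of_not_mem hx ha, hT]
    have recB := card_injOnEqHoms_eq_add (C := C) (B := B) ha
    have recB' := card_injOnEqHoms_eq_add (C := C) (B := B') ha
    rw [ih C T hT, ih _ _ hT'] at recB
    omega

/-- If two multigraphs on `n` vertices have the same homomorphism densities
`t_≤(A,·)` for every `k` and every `A ∈ A_k`, then they are isomorphic. -/
theorem homDensity_determines_multigraph (n : ℕ) (hn : 0 < n)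
    (B B' : Matrix (Fin n) (Fin n) ℕ) (hB : IsAdj B) (hB' : IsAdj B')
    (h : ∀ (k : ℕ) (A : Matrix (Fin k) (Fin k) ℕ), IsAdj A →
      homDensity A B = homDensity A B') :
    ∃ τ : Equiv.Perm (Fin n), ∀ i j, B' i j = B (τ i) (τ j) := by
  have hcard : #(injOnEqHoms B' B univ) = #(injOnEqHoms B' B' univ) :=
    card_injOnEqHoms_eq (fun _ _ C => card_eqHoms_eq_of_homDensity_eq hn hB hB' h C) B' univ
  obtain ⟨φ, hφ⟩ : (injOnEqHoms B' B univ).Nonempty := by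
    rw [← card_pos, hcard, card_pos]
    exact ⟨id, by simp [injOnEqHoms, Function.injective_id]⟩
  simp only [injOnEqHoms, mem_filter, mem_eqHoms, coe_univ, Set.injOn_univ] at hφ
  obtain ⟨hφB, hφinj⟩ := hφ
  exact ⟨Equiv.ofBijective φ (Finite.injective_iff_bijective.1 hφinj), fun i j => by rw [← hφB]; rfl⟩
end

section
/- If a multigraph parameter f is normalized, multiplicative, non-defective, and reflection positive, then its Möbius transform is nonnegative: f†(A) ≥ 0 for every k ∈ ℕ and every A ∈ A_k. -/
open scoped Classical BigOperators
open Filter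

/-- number of edges `e(A) = (1/2) ∑_{i,j} A i j`. -/
def numEdges {k : ℕ} (A : Matrix (Fin k) (Fin k) ℕ) : ℕ :=
  (∑ i, ∑ j, A i j) / 2

/-- `E ∈ E_k`: symmetric, off-diagonal entries in `{0,1}`, diagonal entries in `{0,2}`. -/
def IsEdgeM {k : ℕ} (E : Matrix (Fin k) (Fin k) ℕ) : Prop :=
  (∀ i j, E i j = E j i) ∧ (∀ i j, i ≠ j → E i j ≤ 1) ∧ ∀ i, E i i = 0 ∨ E i i = 2

/-- The (finite) set `E_k` of edge matrices, realized as a `Finset`. -/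
noncomputable def edgeFinset (k : ℕ) : Finset (Matrix (Fin k) (Fin k) ℕ) :=
  Finset.image (fun (E : Fin k → Fin k → Fin 3) => (Matrix.of fun i j => (E i j : ℕ)))
    (Finset.univ.filter fun E => IsEdgeM (Matrix.of fun i j => (E i j : ℕ)))

/-- Möbius transform `f†(A) = ∑_{E ∈ E_k} (−1)^{e(E)} f(A+E)`. -/
noncomputable def mobius {k : ℕ} (f : Matrix (Fin k) (Fin k) ℕ → ℝ)
    (A : Matrix (Fin k) (Fin k) ℕ) : ℝ :=
  ∑ E ∈ edgeFinset k, (-1 : ℝ) ^ numEdges E * f (A + E)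

/-- Block-diagonal matrix `diag(A₁, A₂)`: the disjoint union of two multigraphs. -/
def blockDiag {k₁ k₂ : ℕ} (A₁ : Matrix (Fin k₁) (Fin k₁) ℕ)
    (A₂ : Matrix (Fin k₂) (Fin k₂) ℕ) : Matrix (Fin (k₁ + k₂)) (Fin (k₁ + k₂)) ℕ :=
  Matrix.submatrix (Matrix.fromBlocks A₁ 0 0 A₂) finSumFinEquiv.symm finSumFinEquiv.symm

/-- Extension of a matrix on `Fin m` to `ℕ × ℕ` by zero. -/
def matExt {m : ℕ} (A : Matrix (Fin m) (Fin m) ℕ) : ℕ → ℕ → ℕ := fun i j =>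
  if h : i < m ∧ j < m then A ⟨i, h.1⟩ ⟨j, h.2⟩ else 0

/-- Reindexing used for gluing: a vertex of `F₁F₂` (first the `k` labeled vertices, then the
`n₁` unlabeled vertices of `F₁`, then the `n₂` unlabeled vertices of `F₂`), viewed as a
vertex of `F₂`; vertices of `F₁ ∖ [k]` are sent out of range. -/
def glueIdx (k n₁ n₂ : ℕ) (i : ℕ) : ℕ :=
  if i < k then i else if k + n₁ ≤ i then i - n₁ else k + n₂

/-- Gluing `A₁ ∨ A₂` of two `k`-labeled multigraphs. -/
def glue (k n₁ n₂ : ℕ) (A₁ : Matrix (Fin (k + n₁)) (Fin (k + n₁)) ℕ)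
    (A₂ : Matrix (Fin (k + n₂)) (Fin (k + n₂)) ℕ) :
    Matrix (Fin (k + n₁ + n₂)) (Fin (k + n₁ + n₂)) ℕ :=
  Matrix.of fun i j =>
    max (matExt A₁ i j) (matExt A₂ (glueIdx k (n₁) (n₂) i) (glueIdx k (n₁) (n₂) j))

/-! Write `E_B` for the edge matrix of a set `B` of edges and loops. With no unlabeled vertices,
gluing `A + E_B` and `A + E_C` gives `A + E_{B ∪ C}`, so reflection positivity makes the matrix
`(f (A + E_{B ∪ C}))_{B, C}`, indexed by sets of edges, positive semidefinite. Its quadratic form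
at `x_B = (-1)^|B|` is `f†(A)`, because `∑_{B ∪ C = U} (-1)^(|B| + |C|) = (-1)^|U|`. -/

namespace Finset

variable {X R : Type*} [Fintype X] [DecidableEq X] [CommRing R]

theorem sum_neg_one_pow_card_mul_union_of_nonempty {B : Finset X} (hB : B.Nonempty)
    (g : Finset X → R) : ∑ C, (-1) ^ #C * g (B ∪ C) = 0 := by
  obtain ⟨a, ha⟩ := hB
  -- Adding `a ∈ B` to `C` flips the sign and leaves `B ∪ C` unchanged.
  rw [← powerset_univ, ← insert_erase (mem_univ a), sum_powerset_insert (notMem_erase a _),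
    ← sum_add_distrib]
  refine sum_eq_zero fun C hC => ?_
  have haC : a ∉ C := fun h => notMem_erase a _ (mem_powerset.1 hC h)
  rw [card_insert_of_notMem haC, union_insert, insert_eq_of_mem (mem_union_left C ha)]
  ring

theorem sum_sum_neg_one_pow_card_mul_union (g : Finset X → R) :
    ∑ B, ∑ C, (-1) ^ #B * (-1) ^ #C * g (B ∪ C) = ∑ C, (-1) ^ #C * g C := by
  rw [sum_eq_single ∅ (fun B _ hB => ?_) (fun h => absurd (mem_univ _) h)]
  · simp
  · simp only [mul_assoc, ← mul_sum,
      sum_neg_one_pow_card_mul_union_of_nonempty (nonempty_iff_ne_empty.2 hB), mul_zero]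

end Finset

section EdgeMatrix

variable {V : Type*} [DecidableEq V]

def edgeMatrix (S : Finset (Sym2 V)) : Matrix V V ℕ :=
  Matrix.of fun i j => if s(i, j) ∈ S then (if i = j then 2 else 1) else 0

theorem edgeMatrix_apply (S : Finset (Sym2 V)) (i j : V) :
    edgeMatrix S i j = if s(i, j) ∈ S then (if i = j then 2 else 1) else 0 := rfl

theorem edgeMatrix_comm (S : Finset (Sym2 V)) (i j : V) :
    edgeMatrix S i j = edgeMatrix S j i := by
  simp only [edgeMatrix_apply, Sym2.eq_swap (a := i), eq_comm (a := i)]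

theorem edgeMatrix_injective : Function.Injective (edgeMatrix (V := V)) := by
  intro S T h
  ext z
  induction z using Sym2.ind with
  | _ i j =>
    have hij := congrFun (congrFun h i) j
    simp only [edgeMatrix_apply] at hij
    split_ifs at hij <;> simp_all

theorem max_edgeMatrix (S T : Finset (Sym2 V)) (i j : V) :
    max (edgeMatrix S i j) (edgeMatrix T i j) = edgeMatrix (S ∪ T) i j := by
  simp only [edgeMatrix_apply, Finset.mem_union]
  split_ifs <;> simp_all

theorem add_edgeMatrix_union (A : Matrix V V ℕ) (S T : Finset (Sym2 V)) :
    A + edgeMatrix (S ∪ T) =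
      Matrix.of fun i j => max ((A + edgeMatrix S) i j) ((A + edgeMatrix T) i j) := by
  ext i j
  simp only [Matrix.add_apply, Matrix.of_apply, max_add_add_left, max_edgeMatrix]

theorem edgeMatrix_insert {S : Finset (Sym2 V)} {z : Sym2 V} (hz : z ∉ S) :
    edgeMatrix (insert z S) = edgeMatrix S + edgeMatrix {z} := by
  ext i j
  simp only [Matrix.add_apply, edgeMatrix_apply, Finset.mem_insert, Finset.mem_singleton]
  split_ifs <;> simp_all

theorem edgeMatrix_singleton (a b : V) :
    edgeMatrix {s(a, b)} = Matrix.single a b 1 + Matrix.single b a 1 := by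
  ext i j
  simp only [Matrix.add_apply, edgeMatrix_apply, Finset.mem_singleton, Sym2.eq_iff,
    Matrix.single_apply]
  split_ifs <;> grind

theorem sum_sum_edgeMatrix [Fintype V] (S : Finset (Sym2 V)) :
    ∑ i, ∑ j, edgeMatrix S i j = 2 * S.card := by
  induction S using Finset.induction_on with
  | empty => simp [edgeMatrix_apply]
  | insert z S hz ih =>
    induction z using Sym2.ind with
    | _ a b =>
      simp only [edgeMatrix_insert hz, edgeMatrix_singleton, Matrix.add_apply,
        Finset.sum_add_distrib, ih, Finset.card_insert_of_notMem hz, Matrix.single_apply, ite_and,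
        Finset.sum_ite_irrel, Finset.sum_ite_eq, Finset.mem_univ, if_true, Finset.sum_const_zero]
      ring

end EdgeMatrix

section EdgeSets

variable {k : ℕ}

theorem isEdgeM_edgeMatrix (S : Finset (Sym2 (Fin k))) : IsEdgeM (edgeMatrix S) := by
  refine ⟨edgeMatrix_comm S, fun i j hij => ?_, fun i => ?_⟩ <;>
    simp only [edgeMatrix_apply] <;> split_ifs <;> simp_all

theorem IsEdgeM.exists_edgeMatrix_eq {M : Matrix (Fin k) (Fin k) ℕ} (hM : IsEdgeM M) :
    ∃ S, edgeMatrix S = M := by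
  refine ⟨({z | Sym2.lift ⟨fun i j => M i j, hM.1⟩ z ≠ 0} : Finset _), ?_⟩
  ext i j
  simp only [edgeMatrix_apply, Finset.mem_filter, Finset.mem_univ, true_and, Sym2.lift_mk]
  by_cases hij : i = j
  · subst hij
    rcases hM.2.2 i with h | h <;> simp [h]
  · have := hM.2.1 i j hij
    split_ifs <;> omega

theorem mem_edgeFinset_iff {M : Matrix (Fin k) (Fin k) ℕ} : M ∈ edgeFinset k ↔ IsEdgeM M := by
  refine ⟨fun hM => ?_, fun hM => ?_⟩
  · obtain ⟨E, hE, rfl⟩ := Finset.mem_image.1 hM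
    exact (Finset.mem_filter.1 hE).2
  · have hlt : ∀ i j, M i j < 3 := fun i j => by
      have := hM.2.1 i j
      have := hM.2.2 i
      by_cases hij : i = j <;> subst_vars <;> omega
    exact Finset.mem_image.2
      ⟨fun i j => ⟨M i j, hlt i j⟩, Finset.mem_filter.2 ⟨Finset.mem_univ _, hM⟩, rfl⟩

theorem edgeFinset_eq_image_edgeMatrix :
    edgeFinset k = Finset.univ.image edgeMatrix := by
  ext M
  simp only [mem_edgeFinset_iff, Finset.mem_image, Finset.mem_univ, true_and]
  exact ⟨IsEdgeM.exists_edgeMatrix_eq, fun ⟨S, hS⟩ => hS ▸ isEdgeM_edgeMatrix S⟩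

theorem numEdges_edgeMatrix (S : Finset (Sym2 (Fin k))) : numEdges (edgeMatrix S) = S.card := by
  rw [numEdges, sum_sum_edgeMatrix]
  omega

theorem mobius_eq_sum_edgeMatrix (f : Matrix (Fin k) (Fin k) ℕ → ℝ)
    (A : Matrix (Fin k) (Fin k) ℕ) :
    mobius f A = ∑ S, (-1) ^ S.card * f (A + edgeMatrix S) := by
  rw [mobius, edgeFinset_eq_image_edgeMatrix,
    Finset.sum_image fun S _ T _ h => edgeMatrix_injective h]
  simp only [numEdges_edgeMatrix]

theorem IsAdj.add_edgeMatrix {A : Matrix (Fin k) (Fin k) ℕ} (hA : IsAdj A)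
    (S : Finset (Sym2 (Fin k))) : IsAdj (A + edgeMatrix S) := by
  refine ⟨fun i j => by simp only [Matrix.add_apply, hA.1 i j, edgeMatrix_comm S i j],
    fun i => (hA.2 i).add ?_⟩
  simp only [edgeMatrix_apply]
  split_ifs <;> simp_all

end EdgeSets

theorem Matrix.PosSemidef.sum_sum_mul_mul_nonneg {ι : Type*} [Fintype ι] {M : Matrix ι ι ℝ}
    (hM : M.PosSemidef) (x : ι → ℝ) : 0 ≤ ∑ i, ∑ j, x i * x j * M i j := by
  have := hM.dotProduct_mulVec_nonneg x
  simp only [dotProduct, mulVec, Finset.mul_sum, star_trivial] at this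
  exact this.trans_eq (Finset.sum_congr rfl fun i _ => Finset.sum_congr rfl fun j _ => by ring)

theorem glue_zero_zero {k : ℕ} (A₁ A₂ : Matrix (Fin k) (Fin k) ℕ) :
    glue k 0 0 A₁ A₂ = Matrix.of fun i j => max (A₁ i j) (A₂ i j) := by
  ext i j
  simp [glue, glueIdx, matExt]

def ReflectionPositive (f : ∀ k : ℕ, Matrix (Fin k) (Fin k) ℕ → ℝ) : Prop :=
  ∀ (k N : ℕ) (nl : Fin N → ℕ) (F : ∀ l : Fin N, Matrix (Fin (k + nl l)) (Fin (k + nl l)) ℕ),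
    (∀ l, IsAdj (F l)) →
    (Matrix.of fun l m : Fin N =>
      f (k + nl l + nl m) (glue k (nl l) (nl m) (F l) (F m))).PosSemidef

theorem ReflectionPositive.posSemidef_max {f : ∀ k : ℕ, Matrix (Fin k) (Fin k) ℕ → ℝ}
    (hf : ReflectionPositive f) {ι : Type*} [Fintype ι] {k : ℕ}
    {F : ι → Matrix (Fin k) (Fin k) ℕ} (hF : ∀ l, IsAdj (F l)) :
    (Matrix.of fun l m => f k (Matrix.of fun i j => max (F l i j) (F m i j))).PosSemidef := by
  let e := Fintype.equivFin ι
  have h := hf k _ (fun _ => 0) (fun l => F (e.symm l)) fun l => hF _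
  simp only [glue_zero_zero] at h
  convert h.submatrix e using 1
  ext l m
  simp only [Matrix.submatrix_apply, Matrix.of_apply, Equiv.symm_apply_apply]
  rfl

theorem mobius_nonneg_of_reflectionPositive_general
    (f : ∀ k : ℕ, Matrix (Fin k) (Fin k) ℕ → ℝ)
    -- reflection positive
    (hrp : ∀ (k N : ℕ) (nl : Fin N → ℕ)
      (F : ∀ l : Fin N, Matrix (Fin (k + nl l)) (Fin (k + nl l)) ℕ),
      (∀ l, IsAdj (F l)) →
      (Matrix.of fun l m : Fin N =>
        f (k + nl l + nl m) (glue k (nl l) (nl m) (F l) (F m))).PosSemidef)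
    (k : ℕ) (A : Matrix (Fin k) (Fin k) ℕ) (hA : IsAdj A) :
    0 ≤ mobius (f k) A := by
  rw [mobius_eq_sum_edgeMatrix, ← Finset.sum_sum_neg_one_pow_card_mul_union]
  have := (ReflectionPositive.posSemidef_max hrp hA.add_edgeMatrix).sum_sum_mul_mul_nonneg
    fun S => (-1) ^ S.card
  simpa only [Matrix.of_apply, ← add_edgeMatrix_union] using this

/-- A normalized, multiplicative, non-defective and reflection positive multigraph
parameter has nonnegative Möbius transform. -/
theorem mobius_nonneg_of_reflectionPositive
    (f : ∀ k : ℕ, Matrix (Fin k) (Fin k) ℕ → ℝ)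
    -- `f` is a multigraph parameter: invariance under relabeling
    (hinv : ∀ (k : ℕ) (σ : Equiv.Perm (Fin k)) (A : Matrix (Fin k) (Fin k) ℕ), IsAdj A →
      f k (Matrix.of fun i j => A (σ i) (σ j)) = f k A)
    -- normalized
    (hnorm : f 1 0 = 1)
    -- multiplicative
    (hmult : ∀ (k₁ k₂ : ℕ) (A₁ : Matrix (Fin k₁) (Fin k₁) ℕ) (A₂ : Matrix (Fin k₂) (Fin k₂) ℕ),
      IsAdj A₁ → IsAdj A₂ → f (k₁ + k₂) (blockDiag A₁ A₂) = f k₁ A₁ * f k₂ A₂)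
    -- non-defective
    (hnd : ∀ (k : ℕ) (A : ℕ → Matrix (Fin k) (Fin k) ℕ), (∀ m, IsAdj (A m)) →
      Tendsto (fun m => numEdges (A m)) atTop atTop →
      Tendsto (fun m => f k (A m)) atTop (nhds 0))
    -- reflection positive
    (hrp : ∀ (k N : ℕ) (nl : Fin N → ℕ)
      (F : ∀ l : Fin N, Matrix (Fin (k + nl l)) (Fin (k + nl l)) ℕ),
      (∀ l, IsAdj (F l)) →
      (Matrix.of fun l m : Fin N =>
        f (k + nl l + nl m) (glue k (nl l) (nl m) (F l) (F m))).PosSemidef)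
    (k : ℕ) (A : Matrix (Fin k) (Fin k) ℕ) (hA : IsAdj A) :
    0 ≤ mobius (f k) A :=
  mobius_nonneg_of_reflectionPositive_general f hrp k A hA
end

section
/- Every convergent sequence (W_n)_{n=1}^∞ of multigraphons is tight, i.e. lim_{m→∞} sup_n ∫₀¹∫₀¹ ∑_{k=m}^∞ W_n(x,y,k) dx dy = 0 and lim_{m→∞} sup_n ∫₀¹ ∑_{k=m}^∞ W_n(x,x,k) dx = 0. -/
open scoped Classical BigOperators
open Filter MeasureTheory

/-- A multigraphon: a measurable `W : [0,1]×[0,1]×ℕ₀ → [0,1]` which is symmetric,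
whose values at each point of `[0,1]²` sum to `1` over `ℕ₀`, and which vanishes on the
diagonal for odd multiplicities. -/
structure Multigraphon where
  W : ℝ → ℝ → ℕ → ℝ
  measurable : ∀ m : ℕ, Measurable fun p : ℝ × ℝ => W p.1 p.2 m
  nonneg : ∀ x y m, 0 ≤ W x y m
  le_one : ∀ x y m, W x y m ≤ 1
  symm : ∀ x y m, W x y m = W y x m
  sum_one : ∀ x ∈ Set.Icc (0:ℝ) 1, ∀ y ∈ Set.Icc (0:ℝ) 1, ∑' m : ℕ, W x y m = 1
  diag_odd : ∀ x ∈ Set.Icc (0:ℝ) 1, ∀ m : ℕ, W x x (2 * m + 1) = 0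

/-- `t_≤(A,W) = ∫_{[0,1]^k} ∏_{1≤i≤j≤k} (∑_{l=A(i,j)}^∞ W(x_i,x_j,l)) dx₁⋯dx_k`. -/
noncomputable def tleW {k : ℕ} (A : Matrix (Fin k) (Fin k) ℕ) (G : Multigraphon) : ℝ :=
  ∫ x : Fin k → ℝ in Set.univ.pi fun _ => Set.Icc (0:ℝ) 1,
    ∏ p ∈ Finset.univ.filter (fun p : Fin k × Fin k => p.1 ≤ p.2),
      ∑' l : ℕ, G.W (x p.1) (x p.2) (A p.1 p.2 + l)


/-!
The tail mass `∫∫ ∑_{k ≥ m} W(x,y,k)` is exactly `t_≤(B_m, W)` for the multigraph `B_m` of two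
vertices joined by `m` parallel edges, and the diagonal tail mass from `2m` is `t_≤(C_m, W)` for
the single vertex `C_m` carrying `m` loops. Non-defectiveness makes `f(B_m)` and `f(C_m)` small,
so at one large index `m₀` the tail masses of all but finitely many `W_n` are small; the tail
masses are antitone in `m`, and those of the finitely many remaining `W_n` tend to `0` by
dominated convergence.
-/

open Set

lemma tendsto_iSup_of_tendsto_of_antitone {g : ℕ → ℕ → ℝ} {h : ℕ → ℝ} (φ : ℕ → ℕ)
    (hg₀ : ∀ n m, 0 ≤ g n m) (hanti : ∀ n, Antitone (g n))
    (hlim : ∀ n, Tendsto (g n) atTop (nhds 0))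
    (hconv : ∀ m, Tendsto (fun n => g n (φ m)) atTop (nhds (h m)))
    (hh : Tendsto h atTop (nhds 0)) :
    Tendsto (fun m => ⨆ n, g n m) atTop (nhds 0) := by
  refine tendsto_order.2 ⟨fun a ha => Eventually.of_forall fun m =>
    ha.trans_le (Real.iSup_nonneg (hg₀ · m)), fun ε hε => ?_⟩
  obtain ⟨δ, hδ, hδε⟩ := exists_between hε
  obtain ⟨m₀, hm₀⟩ := (hh.eventually (gt_mem_nhds hδ)).exists
  obtain ⟨N, hN⟩ := ((hconv m₀).eventually (gt_mem_nhds hm₀)).exists_forall_of_atTop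
  have hfirst : ∀ᶠ m in atTop, ∀ n ∈ Finset.range N, g n m < δ :=
    (Finset.range N).eventually_all.2 fun n _ => (hlim n).eventually (gt_mem_nhds hδ)
  filter_upwards [eventually_ge_atTop (φ m₀), hfirst] with m hm hsmall
  refine (ciSup_le fun n => ?_).trans_lt hδε
  rcases lt_or_ge n N with hn | hn
  · exact (hsmall n (Finset.mem_range.2 hn)).le
  · exact (hanti n hm).trans (hN n hn).le

def parallelEdges (m : ℕ) : Matrix (Fin 2) (Fin 2) ℕ := !![0, m; m, 0]

-- A loop contributes `2` to its diagonal entry: this is one vertex carrying `m` loops.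
def loops (m : ℕ) : Matrix (Fin 1) (Fin 1) ℕ := !![2 * m]

lemma isAdj_parallelEdges (m : ℕ) : IsAdj (parallelEdges m) :=
  ⟨by simp [parallelEdges, Fin.forall_fin_two], by simp [parallelEdges, Fin.forall_fin_two]⟩

lemma isAdj_loops (m : ℕ) : IsAdj (loops m) :=
  ⟨by simp [loops], by simp [loops]⟩

lemma numEdges_parallelEdges (m : ℕ) : numEdges (parallelEdges m) = m := by
  simp [numEdges, parallelEdges, Fin.sum_univ_two]
  omega

lemma numEdges_loops (m : ℕ) : numEdges (loops m) = m := by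
  simp [numEdges, loops]

lemma ae_mem_Icc_prod_Icc :
    ∀ᵐ z ∂(volume.restrict (Icc (0:ℝ) 1)).prod (volume.restrict (Icc (0:ℝ) 1)),
      z.1 ∈ Icc (0:ℝ) 1 ∧ z.2 ∈ Icc (0:ℝ) 1 := by
  rw [Measure.prod_restrict]
  exact ae_restrict_mem (measurableSet_Icc.prod measurableSet_Icc)

lemma ae_mem_Icc_diag : ∀ᵐ x ∂volume.restrict (Icc (0:ℝ) 1),
    id x ∈ Icc (0:ℝ) 1 ∧ id x ∈ Icc (0:ℝ) 1 :=
  (ae_restrict_mem measurableSet_Icc).mono fun _ hx => ⟨hx, hx⟩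

namespace Multigraphon

variable (G : Multigraphon)

noncomputable def tail (m : ℕ) (x y : ℝ) : ℝ := ∑' l : ℕ, G.W x y (m + l)

noncomputable def tailMass (m : ℕ) : ℝ := ∫ x in Icc (0:ℝ) 1, ∫ y in Icc (0:ℝ) 1, G.tail m x y

noncomputable def diagTailMass (m : ℕ) : ℝ := ∫ x in Icc (0:ℝ) 1, G.tail m x x

section Pointwise

variable {G} {x y : ℝ}

lemma summable_W (hx : x ∈ Icc (0:ℝ) 1) (hy : y ∈ Icc (0:ℝ) 1) : Summable (G.W x y) := by
  by_contra h
  have := G.sum_one x hx y hy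
  rw [tsum_eq_zero_of_not_summable h] at this
  exact zero_ne_one this

lemma tail_eq_one_sub_sum (m : ℕ) (hx : x ∈ Icc (0:ℝ) 1) (hy : y ∈ Icc (0:ℝ) 1) :
    G.tail m x y = 1 - ∑ j ∈ Finset.range m, G.W x y j := by
  rw [← G.sum_one x hx y hy, ← (summable_W hx hy).sum_add_tsum_nat_add m, tail]
  simp only [add_comm m, add_sub_cancel_left]

lemma tail_zero (hx : x ∈ Icc (0:ℝ) 1) (hy : y ∈ Icc (0:ℝ) 1) : G.tail 0 x y = 1 := by
  simp [tail_eq_one_sub_sum 0 hx hy]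

lemma tail_nonneg (m : ℕ) (x y : ℝ) : 0 ≤ G.tail m x y :=
  tsum_nonneg fun _ => G.nonneg x y _

lemma tail_le_one (m : ℕ) (hx : x ∈ Icc (0:ℝ) 1) (hy : y ∈ Icc (0:ℝ) 1) : G.tail m x y ≤ 1 := by
  rw [tail_eq_one_sub_sum m hx hy, sub_le_self_iff]
  exact Finset.sum_nonneg fun j _ => G.nonneg x y j

lemma antitone_tail (hx : x ∈ Icc (0:ℝ) 1) (hy : y ∈ Icc (0:ℝ) 1) :
    Antitone fun m => G.tail m x y := by
  intro m m' hm
  simp only [tail_eq_one_sub_sum _ hx hy, sub_le_sub_iff_left]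
  exact Finset.sum_le_sum_of_subset_of_nonneg (Finset.range_subset_range.2 hm)
    fun j _ _ => G.nonneg x y j

lemma tendsto_tail (x y : ℝ) : Tendsto (fun m => G.tail m x y) atTop (nhds 0) := by
  simpa only [tail, add_comm] using tendsto_sum_nat_add (G.W x y)

end Pointwise

section TailIntegral

variable {α : Type*} [MeasurableSpace α] {μ : Measure α} {u v : α → ℝ}

lemma measurable_tail (m : ℕ) : Measurable fun p : ℝ × ℝ => G.tail m p.1 p.2 :=
  Measurable.tsum fun l => G.measurable (m + l)

lemma norm_tail_le_one (huv : ∀ᵐ a ∂μ, u a ∈ Icc (0:ℝ) 1 ∧ v a ∈ Icc (0:ℝ) 1) (m : ℕ) :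
    ∀ᵐ a ∂μ, ‖G.tail m (u a) (v a)‖ ≤ 1 := by
  filter_upwards [huv] with a ⟨hu, hv⟩
  rw [Real.norm_of_nonneg (G.tail_nonneg m _ _)]
  exact G.tail_le_one m hu hv

variable [IsFiniteMeasure μ]

lemma integrable_tail (hu : Measurable u) (hv : Measurable v)
    (huv : ∀ᵐ a ∂μ, u a ∈ Icc (0:ℝ) 1 ∧ v a ∈ Icc (0:ℝ) 1) (m : ℕ) :
    Integrable (fun a => G.tail m (u a) (v a)) μ :=
  .of_bound ((G.measurable_tail m).comp (hu.prodMk hv)).aestronglyMeasurable 1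
    (G.norm_tail_le_one huv m)

lemma antitone_integral_tail (hu : Measurable u) (hv : Measurable v)
    (huv : ∀ᵐ a ∂μ, u a ∈ Icc (0:ℝ) 1 ∧ v a ∈ Icc (0:ℝ) 1) :
    Antitone fun m => ∫ a, G.tail m (u a) (v a) ∂μ := fun m m' hm =>
  integral_mono_ae (G.integrable_tail hu hv huv m') (G.integrable_tail hu hv huv m) <| by
    filter_upwards [huv] with a ⟨hu, hv⟩ using G.antitone_tail hu hv hm

lemma tendsto_integral_tail (hu : Measurable u) (hv : Measurable v)
    (huv : ∀ᵐ a ∂μ, u a ∈ Icc (0:ℝ) 1 ∧ v a ∈ Icc (0:ℝ) 1) :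
    Tendsto (fun m => ∫ a, G.tail m (u a) (v a) ∂μ) atTop (nhds 0) := by
  simpa using tendsto_integral_of_dominated_convergence (fun _ => 1)
    (fun m => (G.integrable_tail hu hv huv m).aestronglyMeasurable) (integrable_const 1)
    (G.norm_tail_le_one huv) (ae_of_all _ fun a => G.tendsto_tail (u a) (v a))

end TailIntegral

lemma tailMass_eq_integral_prod (m : ℕ) : G.tailMass m =
    ∫ z, G.tail m z.1 z.2 ∂(volume.restrict (Icc (0:ℝ) 1)).prod (volume.restrict (Icc (0:ℝ) 1)) :=
  (integral_prod (fun z => G.tail m z.1 z.2)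
    (G.integrable_tail measurable_fst measurable_snd ae_mem_Icc_prod_Icc m)).symm

lemma tailMass_nonneg (m : ℕ) : 0 ≤ G.tailMass m :=
  integral_nonneg fun _ => integral_nonneg fun _ => G.tail_nonneg m _ _

lemma antitone_tailMass : Antitone G.tailMass := by
  rw [funext G.tailMass_eq_integral_prod]
  exact G.antitone_integral_tail measurable_fst measurable_snd ae_mem_Icc_prod_Icc

lemma tendsto_tailMass : Tendsto G.tailMass atTop (nhds 0) := by
  rw [funext G.tailMass_eq_integral_prod]
  exact G.tendsto_integral_tail measurable_fst measurable_snd ae_mem_Icc_prod_Icc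

lemma diagTailMass_nonneg (m : ℕ) : 0 ≤ G.diagTailMass m :=
  integral_nonneg fun _ => G.tail_nonneg m _ _

lemma antitone_diagTailMass : Antitone G.diagTailMass :=
  G.antitone_integral_tail measurable_id measurable_id ae_mem_Icc_diag

lemma tendsto_diagTailMass : Tendsto G.diagTailMass atTop (nhds 0) :=
  G.tendsto_integral_tail measurable_id measurable_id ae_mem_Icc_diag

lemma tleW_eq_setIntegral_tail {k : ℕ} (A : Matrix (Fin k) (Fin k) ℕ) :
    tleW A G = ∫ x in univ.pi fun _ => Icc (0:ℝ) 1,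
      ∏ p ∈ Finset.univ.filter (fun p : Fin k × Fin k => p.1 ≤ p.2),
        G.tail (A p.1 p.2) (x p.1) (x p.2) :=
  rfl

lemma tleW_parallelEdges (m : ℕ) : tleW (parallelEdges m) G = G.tailMass m := by
  have hfactors : ∀ x ∈ univ.pi fun _ : Fin 2 => Icc (0:ℝ) 1,
      ∏ p ∈ Finset.univ.filter (fun p : Fin 2 × Fin 2 => p.1 ≤ p.2),
        G.tail (parallelEdges m p.1 p.2) (x p.1) (x p.2) = G.tail m (x 0) (x 1) := by
    intro x hx
    have h0 := hx 0 (mem_univ _)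
    have h1 := hx 1 (mem_univ _)
    simp [Finset.prod_filter, Fintype.prod_prod_type, Fin.prod_univ_two, parallelEdges,
      tail_zero h0 h0, tail_zero h1 h1]
  rw [tleW_eq_setIntegral_tail,
    setIntegral_congr_fun (MeasurableSet.univ_pi fun _ => measurableSet_Icc) hfactors,
    volume_pi, Measure.restrict_pi_pi, tailMass_eq_integral_prod]
  exact (measurePreserving_piFinTwo (α := fun _ => ℝ)
    fun _ => volume.restrict (Icc (0:ℝ) 1)).integral_comp' fun z => G.tail m z.1 z.2

lemma tleW_loops (m : ℕ) : tleW (loops m) G = G.diagTailMass (2 * m) := by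
  have hfactors : ∀ x : Fin 1 → ℝ,
      ∏ p ∈ Finset.univ.filter (fun p : Fin 1 × Fin 1 => p.1 ≤ p.2),
        G.tail (loops m p.1 p.2) (x p.1) (x p.2) = G.tail (2 * m) (x 0) (x 0) := by
    intro x
    simp [Fintype.prod_prod_type, loops]
  rw [tleW_eq_setIntegral_tail, funext hfactors, volume_pi, Measure.restrict_pi_pi]
  exact (measurePreserving_funUnique _ (Fin 1)).integral_comp' fun y => G.tail (2 * m) y y

end Multigraphon

/-- Every convergent sequence of multigraphons is tight. -/
theorem tight_of_convergent (Wseq : ℕ → Multigraphon)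
    -- convergence: the homomorphism densities converge for every `A ∈ A_k` and the
    -- limiting multigraph parameter is non-defective
    (hconv : ∃ f : ∀ k : ℕ, Matrix (Fin k) (Fin k) ℕ → ℝ,
      (∀ (k : ℕ) (A : Matrix (Fin k) (Fin k) ℕ), IsAdj A →
        Tendsto (fun n => tleW A (Wseq n)) atTop (nhds (f k A))) ∧
      (∀ (k : ℕ) (A : ℕ → Matrix (Fin k) (Fin k) ℕ), (∀ m, IsAdj (A m)) →
        Tendsto (fun m => numEdges (A m)) atTop atTop →
        Tendsto (fun m => f k (A m)) atTop (nhds 0))) :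
    -- tightness
    Tendsto (fun m : ℕ => ⨆ n : ℕ,
        ∫ x in Set.Icc (0:ℝ) 1, ∫ y in Set.Icc (0:ℝ) 1,
          ∑' l : ℕ, (Wseq n).W x y (m + l)) atTop (nhds 0) ∧
    Tendsto (fun m : ℕ => ⨆ n : ℕ,
        ∫ x in Set.Icc (0:ℝ) 1, ∑' l : ℕ, (Wseq n).W x x (m + l)) atTop (nhds 0) := by
  obtain ⟨f, hlim, hnondefective⟩ := hconv
  have hedges := hnondefective 2 parallelEdges isAdj_parallelEdges <| by
    simp only [numEdges_parallelEdges]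
    exact tendsto_id
  have hloops := hnondefective 1 loops isAdj_loops <| by
    simp only [numEdges_loops]
    exact tendsto_id
  constructor
  · refine tendsto_iSup_of_tendsto_of_antitone (g := fun n => (Wseq n).tailMass) id
      (fun n => (Wseq n).tailMass_nonneg) (fun n => (Wseq n).antitone_tailMass)
      (fun n => (Wseq n).tendsto_tailMass) (fun m => ?_) hedges
    simpa only [id, Multigraphon.tleW_parallelEdges] using hlim 2 _ (isAdj_parallelEdges m)
  · refine tendsto_iSup_of_tendsto_of_antitone (g := fun n => (Wseq n).diagTailMass) (2 * ·)
      (fun n => (Wseq n).diagTailMass_nonneg) (fun n => (Wseq n).antitone_diagTailMass)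
      (fun n => (Wseq n).tendsto_diagTailMass) (fun m => ?_) hloops
    simpa only [Multigraphon.tleW_loops] using hlim 1 _ (isAdj_loops m)
end

section
/- Let (X(i,j))_{i,j ∈ ℤ∖{0}} be an ℕ₀-valued symmetric array (X(i,j) = X(j,i) a.s., X(i,i) even a.s.) whose joint distribution is invariant under every finitely supported permutation of the index set ℤ∖{0}. Then the family of random variables (X(i,j))_{1 ≤ i ≤ j} is conditionally independent given the σ-algebra generated by the family (X(i,j) : i < 0, j ∈ ℤ∖{0}). -/
open MeasureTheory ProbabilityTheory
open scoped BigOperators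

/-- Nonzero integers: the index set `ℤ ∖ {0}`. -/
abbrev NZ : Type := {z : ℤ // z ≠ 0}
/-- Negative integers `ℤ₋`. -/
abbrev NegZ : Type := {z : ℤ // z < 0}
/-- Positive integers (the copy of `ℕ = {1,2,…}` inside `ℤ ∖ {0}`). -/
abbrev PosZ : Type := {z : ℤ // 0 < z}

def negToNZ (z : NegZ) : NZ := ⟨z.1, z.2.ne⟩
def posToNZ (z : PosZ) : NZ := ⟨z.1, z.2.ne'⟩

/-- A family `(Y_v)_{v ∈ V}` of random variables is conditionally independent given a
sub-σ-algebra `m'` if for every finite subfamily and all bounded measurable real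
functions `g_v`, `E[∏ g_v(Y_v) | m'] = ∏ E[g_v(Y_v) | m']` almost surely. -/
def CondIndepFam {Ω : Type*} {V : Type*} {S : Type*}
    [MeasurableSpace S] (m' : MeasurableSpace Ω) {m0 : MeasurableSpace Ω}
    (Y : V → Ω → S) (P : Measure Ω) : Prop :=
  ∀ (s : Finset V) (g : V → S → ℝ), (∀ v, Measurable (g v)) →
    (∀ v, ∃ C, ∀ x, ‖g v x‖ ≤ C) →
    (P[fun ω => ∏ v ∈ s, g v (Y v ω)|m'])
      =ᵐ[P] fun ω => ∏ v ∈ s, (P[fun ω' => g v (Y v ω')|m']) ω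

/-!
Let `𝒢` be the σ-algebra generated by the rows with a negative index, fix an edge `q = (a, b)`
of positive indices and a finite set `F` of pairs, none of them inside `{a, b}²`. For each
window size `W`, the finitely supported permutation exchanging the positive indices `≤ W` other
than `a, b` with indices below `-W` fixes `q` and moves the window of negative rows together
with `F` into negative rows. By exchangeability and symmetry, `X_q` and the window have the same
joint law as `X_q` and a `𝒢`-measurable vector, so `‖E[g(X_q) | window]‖₂ ≤ ‖E[g(X_q) | 𝒢]‖₂`.
Lévy's upward theorem carries this to the σ-algebra `𝒜 ⊇ 𝒢` generated by `𝒢` and `F`, and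
there the norm comparison forces `E[g(X_q) | 𝒜] = E[g(X_q) | 𝒢]`. An edge `q ∈ s` with minimal
`b - a` has no other edge of `s` inside `{a, b}²`, so this peels `q` off the product:
`E[∏_s | 𝒢] = E[g(X_q) | 𝒢] · E[∏_{s \ q} | 𝒢]`, and induction on `s` concludes.
-/

open Filter Topology

namespace MeasureTheory

variable {Ω : Type*} {m m₁ m₂ m0 : MeasurableSpace Ω} {P : Measure Ω} {Y Z : Ω → ℝ}

lemma integral_sub_sq_eq {A B : Ω → ℝ} (hA : MemLp A 2 P) (hB : MemLp B 2 P) :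
    ∫ ω, (A ω - B ω) ^ 2 ∂P
      = ∫ ω, A ω ^ 2 ∂P - 2 * ∫ ω, A ω * B ω ∂P + ∫ ω, B ω ^ 2 ∂P := by
  have hAB : Integrable (fun ω => 2 * (A ω * B ω)) P := (hA.integrable_mul hB).const_mul 2
  simp_rw [sub_sq, mul_assoc]
  rw [integral_add (f := fun ω => A ω ^ 2 - 2 * (A ω * B ω)) (hA.integrable_sq.sub hAB)
    hB.integrable_sq, integral_sub hA.integrable_sq hAB, integral_const_mul]

variable [IsFiniteMeasure P]

lemma integral_mul_condExp_eq (hm : m ≤ m0) (hZm : StronglyMeasurable[m] Z) (hZ : MemLp Z 2 P)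
    (hY : MemLp Y 2 P) : ∫ ω, Z ω * (P[Y|m]) ω ∂P = ∫ ω, Z ω * Y ω ∂P := by
  calc ∫ ω, Z ω * (P[Y|m]) ω ∂P = ∫ ω, (P[Z * Y|m]) ω ∂P :=
        integral_congr_ae (condExp_mul_of_stronglyMeasurable_left hZm
          (hZ.integrable_mul hY) (hY.integrable one_le_two)).symm
    _ = ∫ ω, Z ω * Y ω ∂P := integral_condExp hm

lemma integral_sq_le_integral_condExp_sq (hm : m ≤ m0) (hY : MemLp Y 2 P)
    (hZm : StronglyMeasurable[m] Z) (hZ : MemLp Z 2 P)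
    (hZY : ∫ ω, Z ω * Y ω ∂P = ∫ ω, Z ω ^ 2 ∂P) :
    ∫ ω, Z ω ^ 2 ∂P ≤ ∫ ω, (P[Y|m]) ω ^ 2 ∂P := by
  have hexp := integral_sub_sq_eq (hY.condExp (m := m) one_le_two) hZ
  have hcross : ∫ ω, (P[Y|m]) ω * Z ω ∂P = ∫ ω, Z ω * Y ω ∂P := by
    simp_rw [mul_comm _ (Z _)]; exact integral_mul_condExp_eq hm hZm hZ hY
  have hnonneg : 0 ≤ ∫ ω, ((P[Y|m]) ω - Z ω) ^ 2 ∂P := integral_nonneg fun ω => sq_nonneg _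
  linarith

lemma condExp_ae_eq_of_integral_condExp_sq_le (h₁₂ : m₁ ≤ m₂) (h₂ : m₂ ≤ m0) (hY : MemLp Y 2 P)
    (hle : ∫ ω, (P[Y|m₂]) ω ^ 2 ∂P ≤ ∫ ω, (P[Y|m₁]) ω ^ 2 ∂P) :
    P[Y|m₂] =ᵐ[P] P[Y|m₁] := by
  have hE₁ : MemLp (P[Y|m₁]) 2 P := hY.condExp one_le_two
  have hE₂ : MemLp (P[Y|m₂]) 2 P := hY.condExp one_le_two
  have hE₁m : StronglyMeasurable[m₁] (P[Y|m₁]) := stronglyMeasurable_condExp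
  have h₂₁ : ∫ ω, (P[Y|m₂]) ω * (P[Y|m₁]) ω ∂P = ∫ ω, (P[Y|m₁]) ω * Y ω ∂P := by
    simp_rw [mul_comm _ ((P[Y|m₁]) _)]
    exact integral_mul_condExp_eq h₂ (hE₁m.mono h₁₂) hE₁ hY
  have h₁₁ : ∫ ω, (P[Y|m₁]) ω * Y ω ∂P = ∫ ω, (P[Y|m₁]) ω ^ 2 ∂P := by
    simp_rw [sq]; exact (integral_mul_condExp_eq (h₁₂.trans h₂) hE₁m hE₁ hY).symm
  have hzero : ∫ ω, ((P[Y|m₂]) ω - (P[Y|m₁]) ω) ^ 2 ∂P = 0 := by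
    have hnonneg : 0 ≤ ∫ ω, ((P[Y|m₂]) ω - (P[Y|m₁]) ω) ^ 2 ∂P :=
      integral_nonneg fun ω => sq_nonneg _
    linarith [integral_sub_sq_eq hE₂ hE₁]
  have hsq := (integral_eq_zero_iff_of_nonneg (fun ω => sq_nonneg _)
    (hE₂.sub hE₁).integrable_sq).1 hzero
  filter_upwards [hsq] with ω hω
  exact sub_eq_zero.1 (pow_eq_zero_iff two_ne_zero |>.1 hω)

lemma integral_condExp_comap_sq_le_of_identDistrib {E : Type*} [MeasurableSpace E]
    {V V' : Ω → E} (hm : m ≤ m0) (hY : MemLp Y 2 P) (hV : Measurable V)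
    (hV'm : MeasurableSpace.comap V' inferInstance ≤ m)
    (hlaw : IdentDistrib (fun ω => (Y ω, V ω)) (fun ω => (Y ω, V' ω)) P P) :
    ∫ ω, (P[Y|MeasurableSpace.comap V inferInstance]) ω ^ 2 ∂P ≤ ∫ ω, (P[Y|m]) ω ^ 2 ∂P := by
  obtain ⟨ψ, hψ, hψV⟩ :=
    (stronglyMeasurable_condExp (m := MeasurableSpace.comap V inferInstance) (μ := P)
      (f := Y)).measurable.exists_eq_measurable_comp
  have hψV' : IdentDistrib (ψ ∘ V) (ψ ∘ V') P P := hlaw.comp (hψ.comp measurable_snd)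
  have hψV_mem : MemLp (ψ ∘ V) 2 P := hψV ▸ hY.condExp one_le_two
  have hψV'_mem : MemLp (ψ ∘ V') 2 P := hψV'.memLp_snd hψV_mem
  have hψV'_meas : StronglyMeasurable[m] (ψ ∘ V') :=
    ((hψ.comp (comap_measurable V')).mono hV'm le_rfl).stronglyMeasurable
  have hmul : ∫ ω, ψ (V' ω) * Y ω ∂P = ∫ ω, ψ (V ω) * Y ω ∂P :=
    (hlaw.comp ((hψ.comp measurable_snd).mul measurable_fst)).integral_eq.symm
  have hsq : ∫ ω, ψ (V ω) * Y ω ∂P = ∫ ω, ψ (V ω) ^ 2 ∂P := by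
    have := integral_mul_condExp_eq (Z := ψ ∘ V) hV.comap_le
      (by rw [← hψV]; exact stronglyMeasurable_condExp) hψV_mem hY
    rw [hψV] at this
    simp only [Function.comp_apply] at this
    simp_rw [sq]; exact this.symm
  have hsq' : ∫ ω, ψ (V' ω) ^ 2 ∂P = ∫ ω, ψ (V ω) ^ 2 ∂P := hψV'.sq.integral_eq.symm
  rw [hψV]
  calc ∫ ω, (ψ ∘ V) ω ^ 2 ∂P = ∫ ω, ψ (V' ω) ^ 2 ∂P := hsq'.symm
    _ ≤ ∫ ω, (P[Y|m]) ω ^ 2 ∂P :=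
      integral_sq_le_integral_condExp_sq hm hY hψV'_meas hψV'_mem (by rw [hmul, hsq, hsq'])

lemma tendsto_integral_condExp_sq (ℱ : Filtration ℕ m0) {C : ℝ} (hYC : ∀ᵐ ω ∂P, |Y ω| ≤ C) :
    Tendsto (fun n => ∫ ω, (P[Y|ℱ n]) ω ^ 2 ∂P) atTop
      (𝓝 (∫ ω, (P[Y|⨆ n, ℱ n]) ω ^ 2 ∂P)) := by
  refine tendsto_integral_of_dominated_convergence (fun _ => C ^ 2)
    (fun n => ((stronglyMeasurable_condExp.mono (ℱ.le n)).pow 2).aestronglyMeasurable)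
    (integrable_const _) (fun n => ?_) ?_
  · filter_upwards [ae_bdd_abs_condExp_of_ae_bdd_abs (m := ℱ n) hYC] with ω hω
    rw [Real.norm_eq_abs, abs_pow, ← sq_abs C]
    exact pow_le_pow_left₀ (abs_nonneg _) (hω.trans (le_abs_self C)) 2
  · filter_upwards [tendsto_ae_condExp (μ := P) (ℱ := ℱ) Y] with ω hω
    exact hω.pow 2

lemma condExp_iSup_ae_eq_of_integral_condExp_sq_le (ℱ : Filtration ℕ m0) (hm : m ≤ ⨆ n, ℱ n)
    (hY : AEStronglyMeasurable Y P) {C : ℝ} (hYC : ∀ᵐ ω ∂P, |Y ω| ≤ C)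
    (hle : ∀ᶠ n in atTop, ∫ ω, (P[Y|ℱ n]) ω ^ 2 ∂P ≤ ∫ ω, (P[Y|m]) ω ^ 2 ∂P) :
    P[Y|⨆ n, ℱ n] =ᵐ[P] P[Y|m] :=
  condExp_ae_eq_of_integral_condExp_sq_le hm (iSup_le ℱ.le)
    (MemLp.of_bound hY C (by simpa only [Real.norm_eq_abs] using hYC))
    (le_of_tendsto (tendsto_integral_condExp_sq ℱ hYC) hle)

lemma condExp_mul_ae_eq_of_condExp_ae_eq {A : MeasurableSpace Ω} {H : Ω → ℝ}
    (hmA : m ≤ A) (hA : A ≤ m0) (hY : Integrable Y P) (hYA : P[Y|A] =ᵐ[P] P[Y|m])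
    (hH : StronglyMeasurable[A] H) {C : ℝ} (hHC : ∀ᵐ ω ∂P, |H ω| ≤ C) :
    P[Y * H|m] =ᵐ[P] P[Y|m] * P[H|m] := by
  have hHC' : ∀ᵐ ω ∂P, ‖H ω‖ ≤ C := by simpa only [Real.norm_eq_abs] using hHC
  have hH_int : Integrable H P :=
    Integrable.of_bound (hH.mono hA).aestronglyMeasurable C hHC'
  have hpull : P[Y * H|A] =ᵐ[P] P[Y|m] * H := by
    rw [mul_comm]
    filter_upwards [condExp_stronglyMeasurable_mul_of_bound hA hH hY C hHC', hYA] with ω h h'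
    rw [h, Pi.mul_apply, Pi.mul_apply, h', mul_comm]
  calc P[Y * H|m] =ᵐ[P] P[P[Y * H|A]|m] := (condExp_condExp_of_le hmA hA).symm
    _ =ᵐ[P] P[P[Y|m] * H|m] := condExp_congr_ae hpull
    _ =ᵐ[P] P[Y|m] * P[H|m] :=
      condExp_mul_of_stronglyMeasurable_left stronglyMeasurable_condExp
        (integrable_condExp.mul_bdd (hH.mono hA).aestronglyMeasurable hHC') hH_int

end MeasureTheory

def windowSwap (W : ℕ) (a b z : ℤ) : ℤ :=
  if 0 < z ∧ z ≤ W ∧ z ≠ a ∧ z ≠ b then -(W + z)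
  else if 0 < -z - W ∧ -z - W ≤ W ∧ -z - W ≠ a ∧ -z - W ≠ b then -z - W
  else z

section windowSwap

variable {W : ℕ} {a b z : ℤ}

lemma windowSwap_involutive (W : ℕ) (a b : ℤ) : Function.Involutive (windowSwap W a b) := by
  intro z; unfold windowSwap; split_ifs <;> omega

lemma windowSwap_ne_zero (hz : z ≠ 0) : windowSwap W a b z ≠ 0 := by
  unfold windowSwap; split_ifs <;> omega

lemma windowSwap_left (ha : 0 < a) : windowSwap W a b a = a := by
  unfold windowSwap; split_ifs <;> omega

lemma windowSwap_right (hb : 0 < b) : windowSwap W a b b = b := by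
  unfold windowSwap; split_ifs <;> omega

lemma windowSwap_neg (ha : 0 < a) (hb : 0 < b) (hz : z ≠ 0) (hzW : -(W : ℤ) ≤ z ∧ z ≤ W)
    (hza : z ≠ a) (hzb : z ≠ b) : windowSwap W a b z < 0 := by
  unfold windowSwap; split_ifs <;> omega

lemma mem_Icc_of_windowSwap_ne (h : windowSwap W a b z ≠ z) : z ∈ Set.Icc (-(2 * W : ℤ)) W := by
  unfold windowSwap at h; split_ifs at h <;> simp only [Set.mem_Icc] <;> omega

end windowSwap

def windowSwapPerm (W : ℕ) (a b : ℤ) : Equiv.Perm NZ :=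
  Function.Involutive.toPerm (fun z : NZ => ⟨windowSwap W a b z, windowSwap_ne_zero z.2⟩)
    fun z => Subtype.ext (windowSwap_involutive W a b z)

lemma finite_support_windowSwapPerm (W : ℕ) (a b : ℤ) :
    {z : NZ | windowSwapPerm W a b z ≠ z}.Finite :=
  ((Set.finite_Icc _ _).preimage Subtype.val_injective.injOn).subset fun _ hz =>
    mem_Icc_of_windowSwap_ne fun h => hz (Subtype.ext h)

noncomputable section ExchangeableArray

variable {Ω : Type*} {X : NZ → NZ → Ω → ℕ} {F : Finset (NZ × NZ)} {W : ℕ}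

/-- Pairs without a negative index are sent to a junk value. -/
def shellIndex (e : NZ × NZ) : NegZ × NZ :=
  if h : e.1.1 < 0 then (⟨e.1, h⟩, e.2)
  else if h' : e.2.1 < 0 then (⟨e.2, h'⟩, e.1)
  else (⟨-1, neg_one_lt_zero⟩, e.2)

def shellArray (X : NZ → NZ → Ω → ℕ) (ω : Ω) (p : NegZ × NZ) : ℕ := X (negToNZ p.1) p.2 ω

lemma shellArray_shellIndex {ω : Ω} (hω : ∀ i j, X i j ω = X j i ω) {e : NZ × NZ}
    (he : e.1.1 < 0 ∨ e.2.1 < 0) : shellArray X ω (shellIndex e) = X e.1 e.2 ω := by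
  unfold shellIndex
  split_ifs with h₁ h₂
  · rfl
  · exact hω _ _
  · omega

def window (W : ℕ) : Finset NZ := (Finset.Icc (-(W : ℤ)) W).subtype (· ≠ 0)

lemma mem_window {z : NZ} : z ∈ window W ↔ -(W : ℤ) ≤ z ∧ (z : ℤ) ≤ W := by
  simp [window]

lemma window_mono : Monotone window := fun _ _ h _ hz => by
  have := mem_window.1 hz
  exact mem_window.2 (by omega)

lemma eventually_subset_window_prod (F : Finset (NZ × NZ)) :
    ∀ᶠ W in atTop, F ⊆ window W ×ˢ window W := by
  have hz : ∀ z : NZ, ∀ᶠ W in atTop, z ∈ window W := fun z =>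
    (eventually_ge_atTop z.1.natAbs).mono fun W hW => mem_window.2 (by omega)
  filter_upwards [(Finset.eventually_all F).2 fun e _ => (hz e.1).and (hz e.2)] with W hW e he
  exact Finset.mem_product.2 (hW e he)

def windowIdx (F : Finset (NZ × NZ)) (W : ℕ) : Finset (NZ × NZ) :=
  {e ∈ window W ×ˢ window W | e.1.1 < 0} ∪ F

lemma windowIdx_mono (F : Finset (NZ × NZ)) : Monotone (windowIdx F) := fun _ _ h =>
  Finset.union_subset_union
    (Finset.filter_subset_filter _ (Finset.product_subset_product (window_mono h) (window_mono h)))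
    le_rfl

lemma windowSwapPerm_neg_of_mem_windowIdx {a b : NZ} (ha : 0 < (a : ℤ)) (hb : 0 < (b : ℤ))
    (hF : ∀ e ∈ F, e ∉ ({a, b} : Set NZ) ×ˢ ({a, b} : Set NZ))
    (hFW : F ⊆ window W ×ˢ window W) {e : NZ × NZ} (he : e ∈ windowIdx F W) :
    (windowSwapPerm W a b e.1 : ℤ) < 0 ∨ (windowSwapPerm W a b e.2 : ℤ) < 0 := by
  have hswap : ∀ z ∈ window W, z ∉ ({a, b} : Set NZ) → (windowSwapPerm W a b z : ℤ) < 0 :=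
    fun z hz hzab => windowSwap_neg ha hb z.2 (mem_window.1 hz)
      (fun h => hzab (Or.inl (Subtype.ext h))) (fun h => hzab (Or.inr (Subtype.ext h)))
  rcases Finset.mem_union.1 he with he | he
  · obtain ⟨hmem, hneg⟩ := Finset.mem_filter.1 he
    refine Or.inl (hswap e.1 (Finset.mem_product.1 hmem).1 ?_)
    rintro (h | h) <;> rw [h] at hneg <;> omega
  · obtain ⟨hW₁, hW₂⟩ := Finset.mem_product.1 (hFW he)
    rcases not_and_or.1 (hF e he) with h | h
    · exact Or.inl (hswap e.1 hW₁ h)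
    · exact Or.inr (hswap e.2 hW₂ h)

def windowVec (X : NZ → NZ → Ω → ℕ) (D : Finset (NZ × NZ)) (ω : Ω) (e : D) : ℕ :=
  X e.1.1 e.1.2 ω

abbrev windowSigma (X : NZ → NZ → Ω → ℕ) (F : Finset (NZ × NZ)) (W : ℕ) : MeasurableSpace Ω :=
  MeasurableSpace.comap (windowVec X (windowIdx F W)) inferInstance

abbrev shellSigma (X : NZ → NZ → Ω → ℕ) : MeasurableSpace Ω :=
  MeasurableSpace.comap (shellArray X) inferInstance

lemma measurable_windowSigma_entry {e : NZ × NZ} (he : e ∈ windowIdx F W) :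
    Measurable[windowSigma X F W] (X e.1 e.2) :=
  (measurable_pi_apply (⟨e, he⟩ : windowIdx F W)).comp (comap_measurable (windowVec X _))

lemma windowSigma_mono {W W' : ℕ} (h : W ≤ W') : windowSigma X F W ≤ windowSigma X F W' :=
  Measurable.comap_le <| @measurable_pi_lambda Ω _ _ (windowSigma X F W') _ _
    fun e => measurable_windowSigma_entry (windowIdx_mono F h e.2)

lemma measurable_iSup_windowSigma_entry {e : NZ × NZ} (he : e ∈ F) :
    Measurable[⨆ W, windowSigma X F W] (X e.1 e.2) :=
  (measurable_windowSigma_entry (W := 0) (Finset.mem_union_right _ he)).mono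
    (le_iSup (windowSigma X F) 0) le_rfl

lemma shellSigma_le_iSup_windowSigma : shellSigma X ≤ ⨆ W, windowSigma X F W := by
  refine Measurable.comap_le <|
    @measurable_pi_lambda Ω _ _ (⨆ W, windowSigma X F W) _ _ fun p => ?_
  set W := p.1.1.natAbs ⊔ p.2.1.natAbs
  have hmem : (negToNZ p.1, p.2) ∈ windowIdx F W := by
    have h₁ : p.1.1.natAbs ≤ W := le_max_left _ _
    have h₂ : p.2.1.natAbs ≤ W := le_max_right _ _
    refine Finset.mem_union_left _ (Finset.mem_filter.2 ⟨Finset.mem_product.2 ⟨?_, ?_⟩, p.1.2⟩)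
    · exact mem_window.2 (show -(W : ℤ) ≤ p.1.1 ∧ p.1.1 ≤ W by omega)
    · exact mem_window.2 (show -(W : ℤ) ≤ p.2.1 ∧ p.2.1 ≤ W by omega)
  exact (measurable_windowSigma_entry hmem).mono (le_iSup (windowSigma X F) W) le_rfl

lemma stronglyMeasurable_iSup_windowSigma_prod {ι : Type*} (t : Finset ι) (e : ι → NZ × NZ)
    (g : ι → ℕ → ℝ) : StronglyMeasurable[⨆ W, windowSigma X (t.image e) W]
      fun ω => ∏ i ∈ t, g i (X (e i).1 (e i).2 ω) :=
  (Finset.measurable_prod t fun i hi => (measurable_of_countable (g i)).comp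
    (measurable_iSup_windowSigma_entry (Finset.mem_image_of_mem e hi))).stronglyMeasurable

variable [MeasurableSpace Ω]

structure IsExchangeableSymmArray (P : Measure Ω) (X : NZ → NZ → Ω → ℕ) : Prop where
  measurable : ∀ i j, Measurable (X i j)
  symm : ∀ᵐ ω ∂P, ∀ i j, X i j ω = X j i ω
  map_perm : ∀ τ : Equiv.Perm NZ, {x | τ x ≠ x}.Finite →
    Measure.map (fun ω => fun p : NZ × NZ => X (τ p.1) (τ p.2) ω) P =
      Measure.map (fun ω => fun p : NZ × NZ => X p.1 p.2 ω) P

lemma shellSigma_le (hX : ∀ i j, Measurable (X i j)) : shellSigma X ≤ ‹MeasurableSpace Ω› :=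
  (measurable_pi_lambda _ fun _ => hX _ _).comap_le

lemma windowSigma_le (hX : ∀ i j, Measurable (X i j)) : windowSigma X F W ≤ ‹MeasurableSpace Ω› :=
  (measurable_pi_lambda _ fun _ => hX _ _).comap_le

def windowFiltration (hX : ∀ i j, Measurable (X i j)) (F : Finset (NZ × NZ)) :
    Filtration ℕ ‹MeasurableSpace Ω› :=
  ⟨windowSigma X F, fun _ _ h => windowSigma_mono h, fun _ => windowSigma_le hX⟩

lemma identDistrib_windowVec {P : Measure Ω} (hX : IsExchangeableSymmArray P X) {a b : NZ}
    (ha : 0 < (a : ℤ)) (hb : 0 < (b : ℤ))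
    (hF : ∀ e ∈ F, e ∉ ({a, b} : Set NZ) ×ˢ ({a, b} : Set NZ)) (hFW : F ⊆ window W ×ˢ window W) :
    IdentDistrib (fun ω => (X a b ω, windowVec X (windowIdx F W) ω))
      (fun ω => (X a b ω, fun e : windowIdx F W => shellArray X ω
        (shellIndex (Prod.map (windowSwapPerm W a b) (windowSwapPerm W a b) e)))) P P := by
  set τ := windowSwapPerm W a b
  have hτa : τ a = a := Subtype.ext (windowSwap_left ha)
  have hτb : τ b = b := Subtype.ext (windowSwap_right hb)
  have hexch : IdentDistrib (fun ω (p : NZ × NZ) => X (τ p.1) (τ p.2) ω)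
      (fun ω (p : NZ × NZ) => X p.1 p.2 ω) P P :=
    ⟨(measurable_pi_lambda _ fun _ => hX.measurable _ _).aemeasurable,
      (measurable_pi_lambda _ fun _ => hX.measurable _ _).aemeasurable,
      hX.map_perm τ (finite_support_windowSwapPerm W a b)⟩
  have hrestrict : Measurable fun t : NZ × NZ → ℕ => (t (a, b), fun e : windowIdx F W => t e) :=
    (measurable_pi_apply _).prodMk (measurable_pi_lambda _ fun _ => measurable_pi_apply _)
  refine (hexch.comp hrestrict).symm.trans (IdentDistrib.of_ae_eq ?_ ?_)
  · exact ((hX.measurable _ _).prodMk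
      (measurable_pi_lambda _ fun _ => hX.measurable _ _)).aemeasurable
  · filter_upwards [hX.symm] with ω hω
    simp only [Function.comp_apply, hτa, hτb, Prod.mk.injEq, true_and]
    funext e
    exact (shellArray_shellIndex (e := Prod.map τ τ e) hω
      (windowSwapPerm_neg_of_mem_windowIdx ha hb hF hFW e.2)).symm

lemma condExp_iSup_windowSigma_ae_eq {P : Measure Ω} [IsProbabilityMeasure P]
    (hX : IsExchangeableSymmArray P X) {a b : NZ} (ha : 0 < (a : ℤ)) (hb : 0 < (b : ℤ))
    (hF : ∀ e ∈ F, e ∉ ({a, b} : Set NZ) ×ˢ ({a, b} : Set NZ)) {g : ℕ → ℝ} {C : ℝ}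
    (hg : ∀ n, |g n| ≤ C) :
    P[fun ω => g (X a b ω)|⨆ W, windowSigma X F W] =ᵐ[P] P[fun ω => g (X a b ω)|shellSigma X] := by
  have hY : Measurable fun ω => g (X a b ω) := (measurable_of_countable g).comp (hX.measurable a b)
  refine condExp_iSup_ae_eq_of_integral_condExp_sq_le (windowFiltration hX.measurable F)
    shellSigma_le_iSup_windowSigma hY.aestronglyMeasurable (ae_of_all _ fun _ => hg _) ?_
  filter_upwards [eventually_subset_window_prod F] with W hW
  exact integral_condExp_comap_sq_le_of_identDistrib (shellSigma_le hX.measurable)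
    (MemLp.of_bound hY.aestronglyMeasurable C (ae_of_all _ fun _ => hg _))
    (measurable_pi_lambda _ fun _ => hX.measurable _ _)
    (Measurable.comap_le <| @measurable_pi_lambda Ω _ _ (shellSigma X) _ _ fun _ =>
      (measurable_pi_apply _).comp (comap_measurable (shellArray X)))
    ((identDistrib_windowVec hX ha hb hF hW).comp
      ((measurable_of_countable g).prodMap measurable_id))

end ExchangeableArray

def edgePair (q : {q : PosZ × PosZ // q.1.1 ≤ q.2.1}) : NZ × NZ := (posToNZ q.1.1, posToNZ q.1.2)

lemma exists_mem_forall_edgePair_not_mem (s : Finset {q : PosZ × PosZ // q.1.1 ≤ q.2.1})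
    (hs : s.Nonempty) : ∃ q ∈ s, ∀ v ∈ s.erase q,
      edgePair v ∉ ({(edgePair q).1, (edgePair q).2} : Set NZ) ×ˢ
        ({(edgePair q).1, (edgePair q).2} : Set NZ) := by
  obtain ⟨q, hq, hmin⟩ := s.exists_min_image (fun v => v.1.2.1 - v.1.1.1) hs
  refine ⟨q, hq, fun v hv ⟨h₁, h₂⟩ => Finset.ne_of_mem_erase hv ?_⟩
  have hdiff := hmin v (Finset.mem_of_mem_erase hv)
  have hv : (v.1.1 : ℤ) ≤ v.1.2 := v.2
  have hq : (q.1.1 : ℤ) ≤ q.1.2 := q.2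
  simp only [edgePair, posToNZ, Set.mem_insert_iff, Set.mem_singleton_iff, Subtype.mk.injEq]
    at h₁ h₂
  exact Subtype.ext (Prod.ext (Subtype.ext (by omega)) (Subtype.ext (by omega)))

theorem edges_condIndep_given_negative_rows_general
    {Ω : Type*} [MeasurableSpace Ω] (P : Measure Ω) [IsProbabilityMeasure P]
    (X : NZ → NZ → Ω → ℕ) (hXmeas : ∀ i j, Measurable (X i j))
    (hsymm : ∀ᵐ ω ∂P, ∀ i j, X i j ω = X j i ω)
    -- exchangeability under finitely supported permutations of `ℤ ∖ {0}`
    (hexch : ∀ τ : Equiv.Perm NZ, {x | τ x ≠ x}.Finite →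
      Measure.map (fun ω => fun p : NZ × NZ => X (τ p.1) (τ p.2) ω) P =
        Measure.map (fun ω => fun p : NZ × NZ => X p.1 p.2 ω) P) :
    CondIndepFam
      (MeasurableSpace.comap
        (fun ω => fun p : NegZ × NZ => X (negToNZ p.1) p.2 ω) inferInstance)
      (fun (q : {q : PosZ × PosZ // q.1.1 ≤ q.2.1}) (ω : Ω) =>
        X (posToNZ q.1.1) (posToNZ q.1.2) ω) P := by
  have hX : IsExchangeableSymmArray P X := ⟨hXmeas, hsymm, hexch⟩
  change CondIndepFam (shellSigma X) _ P
  intro s g _ hgb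
  choose C hC using hgb
  simp only [Real.norm_eq_abs] at hC
  induction s using Finset.strongInduction with | H s ih =>
  rcases s.eq_empty_or_nonempty with rfl | hs
  · simp only [Finset.prod_empty]
    exact (condExp_const (shellSigma_le hXmeas) (1 : ℝ)).eventuallyEq
  obtain ⟨q, hq, hsep⟩ := exists_mem_forall_edgePair_not_mem s hs
  have hkey := condExp_iSup_windowSigma_ae_eq hX q.1.1.2 q.1.2.2
    (Finset.forall_mem_image.2 hsep) (hC q)
  have hint : Integrable (fun ω => g q (X (edgePair q).1 (edgePair q).2 ω)) P :=
    .of_bound ((measurable_of_countable (g q)).comp (hXmeas _ _)).aestronglyMeasurable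
      (C q) (ae_of_all _ fun _ => hC q _)
  have hbound (ω : Ω) : |∏ v ∈ s.erase q, g v (X (edgePair v).1 (edgePair v).2 ω)|
      ≤ ∏ v ∈ s.erase q, C v := by
    rw [Finset.abs_prod]
    exact Finset.prod_le_prod (fun _ _ => abs_nonneg _) fun v _ => hC v _
  have hsplit := condExp_mul_ae_eq_of_condExp_ae_eq shellSigma_le_iSup_windowSigma
    (iSup_le fun _ => windowSigma_le hXmeas) hint hkey
    (stronglyMeasurable_iSup_windowSigma_prod (s.erase q) edgePair g) (ae_of_all _ hbound)
  filter_upwards [hsplit, ih _ (Finset.erase_ssubset hq)] with ω h₁ h₂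
  simp_rw [← Finset.mul_prod_erase s _ hq]
  rw [← h₂]
  exact h₁

/-- For an exchangeable array indexed by `ℤ ∖ {0}`, the entries `(X(i,j))_{1 ≤ i ≤ j}`
are conditionally independent given the σ-algebra generated by
`(X(i,j) : i < 0, j ∈ ℤ ∖ {0})`. -/
theorem edges_condIndep_given_negative_rows
    {Ω : Type*} [MeasurableSpace Ω] (P : Measure Ω) [IsProbabilityMeasure P]
    (X : NZ → NZ → Ω → ℕ) (hXmeas : ∀ i j, Measurable (X i j))
    (hsymm : ∀ᵐ ω ∂P, ∀ i j, X i j ω = X j i ω)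
    (heven : ∀ᵐ ω ∂P, ∀ i, Even (X i i ω))
    -- exchangeability under finitely supported permutations of `ℤ ∖ {0}`
    (hexch : ∀ τ : Equiv.Perm NZ, {x | τ x ≠ x}.Finite →
      Measure.map (fun ω => fun p : NZ × NZ => X (τ p.1) (τ p.2) ω) P =
        Measure.map (fun ω => fun p : NZ × NZ => X p.1 p.2 ω) P) :
    CondIndepFam
      (MeasurableSpace.comap
        (fun ω => fun p : NegZ × NZ => X (negToNZ p.1) p.2 ω) inferInstance)
      (fun (q : {q : PosZ × PosZ // q.1.1 ≤ q.2.1}) (ω : Ω) =>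
        X (posToNZ q.1.1) (posToNZ q.1.2) ω) P :=
  edges_condIndep_given_negative_rows_general P X hXmeas hsymm hexch
end

section
/- Let (X(i,j))_{i,j ∈ ℤ∖{0}} be an ℕ₀-valued symmetric array (X(i,j) = X(j,i) a.s., X(i,i) even a.s.) whose joint distribution is invariant under every finitely supported permutation of the index set ℤ∖{0}, and let N ⊆ ℕ be a finite set. Then the random variable (X(i,j))_{i,j∈N} and the random variable (X(i,j) : i < 0, j ∈ ℤ₋ ∪ ℕ) are conditionally independent given the σ-algebra generated by (X(i,j) : i < 0, j ∈ ℤ₋ ∪ N). -/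
/-!
Write `V` for the entries `X(i,j)` with `i < 0`, `j ∈ ℤ₋ ∪ N`, `Z ⊇ V` for all entries with
`i < 0`, and `Y` for the block on `N × N`. It suffices to show `E[g(Y) | V] = E[g(Y) | Z]`: the
factorisation of `E[g(Y) h(Z) | V]` then follows from the tower property.

Fix a cylinder event `A` of `Z` and finitely many coordinates of `V`. A finitely supported
permutation that fixes `N`, the rows of `A` and those coordinates can move the finitely many
columns of `A` outside `ℤ₋ ∪ N` to negative columns, so by exchangeability `A` can be replaced by
a `V`-measurable event without changing its joint law with `Y` and with the chosen coordinates.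
Since `E[g(Y) | V]` is the L¹-limit of its conditional expectations given finitely many
coordinates of `V` (Lévy's upward theorem), `∫_A E[g(Y) | V] = ∫_A g(Y)`, first for cylinders
`A` and then, by Dynkin's π-λ theorem, for every `Z`-measurable `A`.
-/

open MeasureTheory ProbabilityTheory

/-- Two random variables `Y`, `Z` are conditionally independent given a sub-σ-algebra
`m'` if for all bounded measurable real functions `g`, `h`,
`E[g(Y)h(Z) | m'] = E[g(Y) | m']·E[h(Z) | m']` almost surely. -/
def CondIndepPair {Ω : Type*} {S : Type*} {T : Type*}
    [MeasurableSpace S] [MeasurableSpace T] (m' : MeasurableSpace Ω)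
    {m0 : MeasurableSpace Ω} (Y : Ω → S) (Z : Ω → T) (P : Measure Ω) : Prop :=
  ∀ (g : S → ℝ) (h : T → ℝ), Measurable g → Measurable h →
    (∃ C, ∀ x, ‖g x‖ ≤ C) → (∃ C, ∀ x, ‖h x‖ ≤ C) →
    (P[fun ω => g (Y ω) * h (Z ω)|m'])
      =ᵐ[P] fun ω => (P[fun ω' => g (Y ω')|m']) ω * (P[fun ω' => h (Z ω')|m']) ω


open Filter Set Function
open scoped ENNReal Topology

theorem norm_indicator_one_le {α : Type*} (A : Set α) (x : α) :
    ‖A.indicator (1 : α → ℝ) x‖ ≤ 1 :=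
  (norm_indicator_le_norm_self _ _).trans_eq norm_one

section CondExp

variable {Ω : Type*} {m m' m0 : MeasurableSpace Ω} {μ : Measure Ω}

theorem enorm_integral_mul_sub_le {χ g₁ g₂ : Ω → ℝ} (hχm : AEStronglyMeasurable χ μ)
    (hχ : ∀ ω, ‖χ ω‖ ≤ 1) (h₁ : Integrable g₁ μ) (h₂ : Integrable g₂ μ) :
    ‖∫ ω, χ ω * g₁ ω ∂μ - ∫ ω, χ ω * g₂ ω ∂μ‖ₑ ≤ eLpNorm (g₁ - g₂) 1 μ := by
  rw [← integral_sub (h₁.bdd_mul hχm (ae_of_all _ hχ)) (h₂.bdd_mul hχm (ae_of_all _ hχ)),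
    eLpNorm_one_eq_lintegral_enorm]
  refine (enorm_integral_le_lintegral_enorm _).trans (lintegral_mono fun ω => ?_)
  rw [← mul_sub, enorm_mul]
  exact mul_le_of_le_one_left' (by simpa [← ofReal_norm] using hχ ω)

theorem integral_indicator_one_mul {A : Set Ω} (hA : MeasurableSet A) (f : Ω → ℝ) :
    ∫ ω, A.indicator 1 ω * f ω ∂μ = ∫ ω in A, f ω ∂μ := by
  rw [← integral_indicator hA]
  congr 1 with ω
  by_cases hω : ω ∈ A <;> simp [hω]

theorem setIntegral_eq_of_isPiSystem (hm : m ≤ m0)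
    {C : Set (Set Ω)} (hgen : m = MeasurableSpace.generateFrom C) (hC : IsPiSystem C)
    {f g : Ω → ℝ} (hf : Integrable f μ) (hg : Integrable g μ)
    (huniv : ∫ ω, f ω ∂μ = ∫ ω, g ω ∂μ) (hCeq : ∀ A ∈ C, ∫ ω in A, f ω ∂μ = ∫ ω in A, g ω ∂μ)
    {A : Set Ω} (hA : MeasurableSet[m] A) : ∫ ω in A, f ω ∂μ = ∫ ω in A, g ω ∂μ := by
  induction A, hA using MeasurableSpace.induction_on_inter hgen hC with
  | empty => simp
  | basic A hA => exact hCeq A hA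
  | compl A hAm hA =>
    rw [setIntegral_compl (hm A hAm) hf, setIntegral_compl (hm A hAm) hg, huniv, hA]
  | iUnion A hdisj hAm hA =>
    rw [integral_iUnion (fun i => hm _ (hAm i)) hdisj hf.integrableOn,
      integral_iUnion (fun i => hm _ (hAm i)) hdisj hg.integrableOn]
    exact tsum_congr hA

variable [IsFiniteMeasure μ]

theorem integral_mul_condExp (hm : m ≤ m0) {χ f : Ω → ℝ} {C : ℝ}
    (hχ : StronglyMeasurable[m] χ) (hχC : ∀ ω, ‖χ ω‖ ≤ C) (hf : Integrable f μ) :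
    ∫ ω, χ ω * μ[f|m] ω ∂μ = ∫ ω, χ ω * f ω ∂μ := by
  have hχf : Integrable (χ * f) μ :=
    hf.bdd_mul (hχ.mono hm).aestronglyMeasurable (ae_of_all _ hχC)
  calc ∫ ω, χ ω * μ[f|m] ω ∂μ = ∫ ω, μ[χ * f|m] ω ∂μ :=
        integral_congr_ae (condExp_mul_of_stronglyMeasurable_left hχ hχf hf).symm
    _ = ∫ ω, χ ω * f ω ∂μ := integral_condExp hm

theorem setIntegral_condExp_iSup_eq_of_substitute (ℱ : Filtration ℕ m0) {f : Ω → ℝ}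
    (hf : Integrable f μ) {A : Set Ω} (hA : MeasurableSet A)
    (hsub : ∀ n, ∃ χ : Ω → ℝ, StronglyMeasurable[⨆ n, ℱ n] χ ∧ (∀ ω, ‖χ ω‖ ≤ 1) ∧
      ∫ ω, χ ω * f ω ∂μ = ∫ ω in A, f ω ∂μ ∧
      ∫ ω, χ ω * μ[f|ℱ n] ω ∂μ = ∫ ω in A, μ[f|ℱ n] ω ∂μ) :
    ∫ ω in A, μ[f|⨆ n, ℱ n] ω ∂μ = ∫ ω in A, f ω ∂μ := by
  -- With `ξ = μ[f|⨆ n, ℱ n]` and `ξₙ = μ[f|ℱ n]`: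
  -- `∫_A ξ ≈ ∫_A ξₙ = ∫ χ ξₙ ≈ ∫ χ ξ = ∫ χ f = ∫_A f`, both errors being at most `‖ξₙ - ξ‖₁ → 0`.
  set ξ := μ[f|⨆ n, ℱ n]
  have hm : ⨆ n, ℱ n ≤ m0 := iSup_le ℱ.le
  have h1A : AEStronglyMeasurable (A.indicator (1 : Ω → ℝ)) μ :=
    (stronglyMeasurable_one.indicator hA).aestronglyMeasurable
  have hbound : ∀ n, ‖∫ ω in A, ξ ω ∂μ - ∫ ω in A, f ω ∂μ‖ₑ
      ≤ 2 * eLpNorm (μ[f|ℱ n] - ξ) 1 μ := by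
    intro n
    obtain ⟨χ, hχm, hχ1, hχf, hχn⟩ := hsub n
    rw [← hχf, ← integral_mul_condExp hm hχm hχ1 hf, ← integral_indicator_one_mul hA]
    calc ‖∫ ω, A.indicator 1 ω * ξ ω ∂μ - ∫ ω, χ ω * ξ ω ∂μ‖ₑ
        = ‖(∫ ω, A.indicator 1 ω * ξ ω ∂μ - ∫ ω, A.indicator 1 ω * μ[f|ℱ n] ω ∂μ)
            + (∫ ω, χ ω * μ[f|ℱ n] ω ∂μ - ∫ ω, χ ω * ξ ω ∂μ)‖ₑ := by
          rw [hχn, ← integral_indicator_one_mul hA (μ[f|ℱ n])]; congr 1; ring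
      _ ≤ eLpNorm (ξ - μ[f|ℱ n]) 1 μ + eLpNorm (μ[f|ℱ n] - ξ) 1 μ :=
          (enorm_add_le _ _).trans (add_le_add
            (enorm_integral_mul_sub_le h1A (norm_indicator_one_le A) integrable_condExp
              integrable_condExp)
            (enorm_integral_mul_sub_le ((hχm.mono hm).aestronglyMeasurable) hχ1
              integrable_condExp integrable_condExp))
      _ = 2 * eLpNorm (μ[f|ℱ n] - ξ) 1 μ := by rw [eLpNorm_sub_comm, two_mul]
  have hlim : Tendsto (fun n => 2 * eLpNorm (μ[f|ℱ n] - ξ) 1 μ) atTop (𝓝 0) := by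
    simpa using ENNReal.Tendsto.const_mul (tendsto_eLpNorm_condExp f) (Or.inr ENNReal.ofNat_ne_top)
  have h0 := ge_of_tendsto' hlim hbound
  rwa [nonpos_iff_eq_zero, enorm_eq_zero, sub_eq_zero] at h0

theorem condExp_iSup_ae_eq_of_substitute (ℱ : Filtration ℕ m0)
    (hℱm : ⨆ n, ℱ n ≤ m) (hm : m ≤ m0) {C : Set (Set Ω)}
    (hgen : m = MeasurableSpace.generateFrom C) (hC : IsPiSystem C)
    {f : Ω → ℝ} (hf : Integrable f μ)
    (hsub : ∀ A ∈ C, ∀ n, ∃ χ : Ω → ℝ, StronglyMeasurable[⨆ n, ℱ n] χ ∧ (∀ ω, ‖χ ω‖ ≤ 1) ∧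
      ∫ ω, χ ω * f ω ∂μ = ∫ ω in A, f ω ∂μ ∧
      ∫ ω, χ ω * μ[f|ℱ n] ω ∂μ = ∫ ω in A, μ[f|ℱ n] ω ∂μ) :
    μ[f|⨆ n, ℱ n] =ᵐ[μ] μ[f|m] := by
  have hℱ : ⨆ n, ℱ n ≤ m0 := iSup_le ℱ.le
  refine ae_eq_condExp_of_forall_setIntegral_eq hm hf
    (fun _ _ _ => integrable_condExp.integrableOn) (fun A hA _ => ?_)
    (stronglyMeasurable_condExp.mono hℱm).aestronglyMeasurable
  refine setIntegral_eq_of_isPiSystem hm hgen hC integrable_condExp hf (integral_condExp hℱ)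
    (fun B hB => ?_) hA
  have hBm : MeasurableSet[m0] B := hm _ (hgen ▸ MeasurableSpace.measurableSet_generateFrom hB)
  exact setIntegral_condExp_iSup_eq_of_substitute ℱ hf hBm (hsub B hB)

theorem condExp_mul_ae_eq_of_condExp_eq (hmm' : m ≤ m')
    (hm' : m' ≤ m0) {f h : Ω → ℝ} {C : ℝ} (hf : Integrable f μ)
    (hh : StronglyMeasurable[m'] h) (hhC : ∀ ω, ‖h ω‖ ≤ C) (heq : μ[f|m] =ᵐ[μ] μ[f|m']) :
    μ[f * h|m] =ᵐ[μ] μ[f|m] * μ[h|m] := by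
  have hhi : Integrable h μ := .of_bound (hh.mono hm').aestronglyMeasurable C (ae_of_all _ hhC)
  have hhm : AEStronglyMeasurable h μ := (hh.mono hm').aestronglyMeasurable
  calc μ[f * h|m] =ᵐ[μ] μ[μ[h * f|m']|m] := by
        rw [mul_comm]; exact (condExp_condExp_of_le hmm' hm').symm
    _ =ᵐ[μ] μ[h * μ[f|m']|m] :=
        condExp_congr_ae (condExp_mul_of_stronglyMeasurable_left hh
          (hf.bdd_mul hhm (ae_of_all _ hhC)) hf)
    _ =ᵐ[μ] μ[μ[f|m] * h|m] := by
        refine condExp_congr_ae ?_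
        filter_upwards [heq] with ω hω
        simp only [Pi.mul_apply, hω, mul_comm]
    _ =ᵐ[μ] μ[f|m] * μ[h|m] :=
        condExp_mul_of_stronglyMeasurable_left stronglyMeasurable_condExp
          (integrable_condExp.bdd_mul hhm (ae_of_all _ hhC) |>.congr
            (ae_of_all _ fun ω => mul_comm _ _)) hhi

end CondExp

theorem condIndepPair_of_condExp_eq {Ω S T : Type*} [MeasurableSpace S] [MeasurableSpace T]
    {m m' m0 : MeasurableSpace Ω} {μ : Measure Ω} [IsFiniteMeasure μ] (hmm' : m ≤ m')
    (hm' : m' ≤ m0) {Y : Ω → S} {Z : Ω → T} (hY : Measurable[m0] Y) (hZ : Measurable[m'] Z)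
    (heq : ∀ g : S → ℝ, Measurable g → Integrable (g ∘ Y) μ → μ[g ∘ Y|m] =ᵐ[μ] μ[g ∘ Y|m']) :
    CondIndepPair m Y Z μ := by
  rintro g h hg hh ⟨Cg, hCg⟩ ⟨Ch, hCh⟩
  have hgY : Integrable (g ∘ Y) μ :=
    .of_bound (hg.comp hY).aestronglyMeasurable Cg (ae_of_all _ fun ω => hCg _)
  exact condExp_mul_ae_eq_of_condExp_eq hmm' hm' hgY (hh.comp hZ).stronglyMeasurable
    (fun ω => hCh (Z ω)) (heq g hg hgY)

section Filtration

variable {Ω ι E : Type*} {m0 : MeasurableSpace Ω} [MeasurableSpace E] [TopologicalSpace E]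
  [TopologicalSpace.MetrizableSpace E] [SecondCountableTopology E] [BorelSpace E]

theorem iSup_natural_comp_eq_comap {v : Ω → ι → E} (hv : Measurable v) {u : ℕ → ι}
    (hu : Surjective u) :
    ⨆ n, Filtration.natural (fun k ω => v ω (u k))
      (fun k => ((measurable_pi_apply (u k)).comp hv).stronglyMeasurable) n =
      MeasurableSpace.comap v inferInstance := by
  refine le_antisymm (iSup_le fun n => iSup₂_le fun k _ => ?_) ?_
  · change MeasurableSpace.comap ((fun x => x (u k)) ∘ v) _ ≤ _
    rw [← MeasurableSpace.comap_comp]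
    exact MeasurableSpace.comap_mono (measurable_pi_apply _).comap_le
  · change MeasurableSpace.comap v (⨆ i, MeasurableSpace.comap (fun x : ι → E => x i) _) ≤ _
    rw [MeasurableSpace.comap_iSup]
    refine iSup_le fun i => ?_
    obtain ⟨k, rfl⟩ := hu i
    rw [MeasurableSpace.comap_comp]
    exact le_iSup_of_le k (le_iSup₂_of_le k le_rfl le_rfl)

end Filtration

theorem Equiv.Perm.exists_finite_mapsTo {α : Type*} {T : Set α}
    (hT : T.Infinite) {F : Set α} (hF : F.Finite) (D : Finset α) :
    ∃ σ : Perm α, {x | σ x ≠ x}.Finite ∧ (∀ x ∈ F, x ∉ D → σ x = x) ∧ ∀ x ∈ D, σ x ∈ T := by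
  classical
  induction D using Finset.induction_on with
  | empty => exact ⟨1, by simp, fun _ _ _ => rfl, by simp⟩
  | insert a D _ ih =>
    obtain ⟨σ, hσ, hσF, hσD⟩ := ih
    obtain ⟨b, hbT, hb⟩ := (hT.sdiff ((hF.union hσ).union D.finite_toSet)).nonempty
    simp only [mem_union, mem_ofPred_eq, Finset.mem_coe, not_or, not_not] at hb
    obtain ⟨⟨hbF, hσb⟩, hbD⟩ := hb
    refine ⟨σ * swap a b, ?_, fun x hxF hx => ?_, fun x hx => ?_⟩
    · refine (hσ.union (Set.toFinite {a, b})).subset fun x hx => ?_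
      by_contra hxσ
      simp only [mem_union, mem_ofPred_eq, mem_insert_iff, mem_singleton_iff, not_or,
        not_not] at hxσ
      simp [swap_apply_of_ne_of_ne hxσ.2.1 hxσ.2.2, hxσ.1] at hx
    · rw [Finset.mem_insert, not_or] at hx
      rw [mul_apply, swap_apply_of_ne_of_ne hx.1 (ne_of_mem_of_not_mem hxF hbF), hσF x hxF hx.2]
    · rcases Finset.mem_insert.mp hx with rfl | hxD
      · rwa [mul_apply, swap_apply_left, hσb]
      · rw [mul_apply, swap_apply_of_ne_of_ne (ne_of_mem_of_not_mem hxD ‹a ∉ D›)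
          (ne_of_mem_of_not_mem hxD hbD)]
        exact hσD x hxD

def IsExchangeableArray {Ω : Type*} [MeasurableSpace Ω] (X : NZ → NZ → Ω → ℕ) (P : Measure Ω) :
    Prop :=
  ∀ τ : Equiv.Perm NZ, {x | τ x ≠ x}.Finite →
    Measure.map (fun ω => fun p : NZ × NZ => X (τ p.1) (τ p.2) ω) P =
      Measure.map (fun ω => fun p : NZ × NZ => X p.1 p.2 ω) P

def negOrN (N : Finset PosZ) : NegZ ⊕ {x // x ∈ N} → NZ := Sum.elim negToNZ fun x => posToNZ x.1

section ExchangeableArray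

variable {Ω : Type*} {X : NZ → NZ → Ω → ℕ}

def negRows (X : NZ → NZ → Ω → ℕ) (ω : Ω) : NegZ × NZ → ℕ := fun p => X (negToNZ p.1) p.2 ω

def negRowsNegOrN (X : NZ → NZ → Ω → ℕ) (N : Finset PosZ) (ω : Ω) :
    NegZ × (NegZ ⊕ {x // x ∈ N}) → ℕ :=
  fun p => negRows X ω (p.1, negOrN N p.2)

theorem comap_negRowsNegOrN_le (N : Finset PosZ) :
    MeasurableSpace.comap (negRowsNegOrN X N) inferInstance ≤
      MeasurableSpace.comap (negRows X) inferInstance := by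
  change MeasurableSpace.comap
      ((fun z (p : NegZ × (NegZ ⊕ {x // x ∈ N})) => z (p.1, negOrN N p.2)) ∘ negRows X) _ ≤ _
  rw [← MeasurableSpace.comap_comp]
  exact MeasurableSpace.comap_mono (measurable_pi_lambda _ fun _ => measurable_pi_apply _).comap_le

variable [MeasurableSpace Ω] {P : Measure Ω}

theorem measurable_negRows (hX : ∀ i j, Measurable (X i j)) : Measurable (negRows X) :=
  measurable_pi_lambda _ fun _ => hX _ _

theorem measurable_negRowsNegOrN (hX : ∀ i j, Measurable (X i j)) (N : Finset PosZ) :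
    Measurable (negRowsNegOrN X N) :=
  measurable_pi_lambda _ fun _ => hX _ _

theorem IsExchangeableArray.integral_comp_perm (hX : ∀ i j, Measurable (X i j))
    (hexch : IsExchangeableArray X P) {τ : Equiv.Perm NZ} (hτ : {x | τ x ≠ x}.Finite)
    {W : (NZ × NZ → ℕ) → ℝ} (hW : Measurable W) :
    ∫ ω, W (fun p => X (τ p.1) (τ p.2) ω) ∂P = ∫ ω, W (fun p => X p.1 p.2 ω) ∂P := by
  have hXτ : Measurable fun ω (p : NZ × NZ) => X (τ p.1) (τ p.2) ω :=
    measurable_pi_lambda _ fun _ => hX _ _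
  have hX' : Measurable fun ω (p : NZ × NZ) => X p.1 p.2 ω :=
    measurable_pi_lambda _ fun _ => hX _ _
  rw [← integral_map hXτ.aemeasurable hW.aestronglyMeasurable,
    ← integral_map hX'.aemeasurable hW.aestronglyMeasurable, hexch τ hτ]

theorem infinite_setOf_neg : {x : NZ | x.1 < 0}.Infinite :=
  haveI : Infinite NegZ := (Set.Iio_infinite (0 : ℤ)).to_subtype
  Set.infinite_of_injective_forall_mem (f := negToNZ)
    (fun _ _ h => Subtype.ext (congrArg Subtype.val h :)) fun z => z.2

theorem exists_perm_snd_mem_range_negOrN (N : Finset PosZ) (s : Finset (NegZ × NZ))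
    {F : Set NZ} (hF : F.Finite) (hFN : F ⊆ range (negOrN N)) :
    ∃ σ : Equiv.Perm NZ, {x | σ x ≠ x}.Finite ∧ (∀ x ∈ F, σ x = x) ∧
      (∀ p ∈ s, σ (negToNZ p.1) = negToNZ p.1) ∧ ∀ p ∈ s, σ p.2 ∈ range (negOrN N) := by
  classical
  set D := (s.image Prod.snd).filter (· ∉ range (negOrN N))
  have hD : ∀ x ∈ range (negOrN N), x ∉ D := fun x hx hxD => (Finset.mem_filter.mp hxD).2 hx
  obtain ⟨σ, hσ, hσfix, hσD⟩ := Equiv.Perm.exists_finite_mapsTo infinite_setOf_neg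
    ((hF.union (s.image fun p => negToNZ p.1).finite_toSet).union
      (s.image Prod.snd).finite_toSet) D
  refine ⟨σ, hσ, fun x hx => hσfix x (Or.inl (Or.inl hx)) (hD x (hFN hx)),
    fun p hp => hσfix _ (Or.inl (Or.inr (Finset.mem_image_of_mem _ hp))) (hD _ ⟨.inl p.1, rfl⟩),
    fun p hp => ?_⟩
  by_cases hpD : p.2 ∈ D
  · exact ⟨.inl ⟨_, hσD _ hpD⟩, rfl⟩
  · rw [hσfix _ (Or.inr (Finset.mem_image_of_mem _ hp)) hpD]
    by_contra h
    exact hpD (Finset.mem_filter.mpr ⟨Finset.mem_image_of_mem _ hp, h⟩)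

theorem IsExchangeableArray.exists_substitute_indicator (hX : ∀ i j, Measurable (X i j))
    (hexch : IsExchangeableArray X P) (N : Finset PosZ) {s : Finset (NegZ × NZ)}
    {S : Set (s → ℕ)} (hS : MeasurableSet S) {F : Set NZ} (hF : F.Finite)
    (hFN : F ⊆ range (negOrN N)) :
    ∃ χ : Ω → ℝ, StronglyMeasurable[MeasurableSpace.comap (negRowsNegOrN X N) inferInstance] χ ∧
      (∀ ω, ‖χ ω‖ ≤ 1) ∧
      ∀ W : (NZ × NZ → ℕ) → ℝ, Measurable W → DependsOn W (F ×ˢ F) →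
        ∫ ω, χ ω * W (fun p => X p.1 p.2 ω) ∂P =
          ∫ ω in negRows X ⁻¹' cylinder s S, W (fun p => X p.1 p.2 ω) ∂P := by
  obtain ⟨σ, hσ, hσF, hσrow, hσcol⟩ := exists_perm_snd_mem_range_negOrN N s hF hFN
  choose j hj using fun p : s => hσcol p.1 p.2
  have hinv : ∀ {x}, σ x = x → σ⁻¹ x = x := fun h => Equiv.Perm.inv_eq_iff_eq.mpr h.symm
  -- `χ` reads the cylinder event off the columns `σ j ∈ ℤ₋ ∪ N` instead of `j`; relabelling the
  -- array by `σ⁻¹` fixes `W` and turns `χ` back into the indicator of the event.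
  refine ⟨fun ω => S.indicator 1 fun p : s => X (negToNZ p.1.1) (σ p.1.2) ω, ?_,
    fun ω => norm_indicator_one_le _ _, fun W hW hWF => ?_⟩
  · have hχ : (fun ω => S.indicator (1 : (s → ℕ) → ℝ) fun p : s => X (negToNZ p.1.1) (σ p.1.2) ω)
        = (fun v => S.indicator 1 fun p : s => v (p.1.1, j p)) ∘ negRowsNegOrN X N := by
      ext ω; simp only [comp_apply, negRowsNegOrN, negRows, hj]
    rw [hχ]
    exact (((measurable_one.indicator hS).comp (measurable_pi_lambda _ fun _ =>
      measurable_pi_apply _)).comp (comap_measurable _)).stronglyMeasurable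
  have hσ' : {x | σ⁻¹ x ≠ x}.Finite := hσ.subset fun _ hx h => hx (hinv h)
  have hG : Measurable fun a : NZ × NZ → ℕ =>
      S.indicator 1 (fun p : s => a (negToNZ p.1.1, σ p.1.2)) * W a :=
    ((measurable_one.indicator hS).comp (measurable_pi_lambda _ fun _ =>
      measurable_pi_apply _)).mul hW
  have hA : MeasurableSet (negRows X ⁻¹' cylinder s S) := measurable_negRows hX hS.cylinder
  rw [← integral_indicator_one_mul hA, ← hexch.integral_comp_perm hX hσ' hG]
  refine integral_congr_ae (ae_of_all _ fun ω => ?_)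
  have hW' : W (fun p => X (σ⁻¹ p.1) (σ⁻¹ p.2) ω) = W (fun p => X p.1 p.2 ω) :=
    hWF fun p hp => by rw [hinv (hσF _ hp.1), hinv (hσF _ hp.2)]
  have hσσ : ∀ y, σ⁻¹ (σ y) = y := fun y => Equiv.Perm.inv_eq_iff_eq.mpr rfl
  simp only [hσσ, hW', fun p : s => hinv (hσrow p.1 p.2)]
  rfl

theorem IsExchangeableArray.condExp_comap_negRowsNegOrN_ae_eq [IsFiniteMeasure P]
    (hX : ∀ i j, Measurable (X i j)) (hexch : IsExchangeableArray X P) (N : Finset PosZ)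
    {F : Set NZ} (hF : F.Finite) (hFN : F ⊆ range (negOrN N)) {W : (NZ × NZ → ℕ) → ℝ}
    (hW : Measurable W) (hWF : DependsOn W (F ×ˢ F))
    (hWi : Integrable (fun ω => W fun p => X p.1 p.2 ω) P) :
    P[fun ω => W fun p => X p.1 p.2 ω|MeasurableSpace.comap (negRowsNegOrN X N) inferInstance]
      =ᵐ[P] P[fun ω => W fun p => X p.1 p.2 ω|MeasurableSpace.comap (negRows X) inferInstance] := by
  have : Nonempty (NegZ × (NegZ ⊕ {x // x ∈ N})) := ⟨(⟨-1, by norm_num⟩, .inl ⟨-1, by norm_num⟩)⟩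
  obtain ⟨u, hu⟩ := exists_surjective_nat (NegZ × (NegZ ⊕ {x // x ∈ N}))
  have hV := measurable_negRowsNegOrN hX N
  set ℱ := Filtration.natural (fun k ω => negRowsNegOrN X N ω (u k))
    (fun k => ((measurable_pi_apply (u k)).comp hV).stronglyMeasurable)
  have hℱ : ⨆ n, ℱ n = MeasurableSpace.comap (negRowsNegOrN X N) inferInstance :=
    iSup_natural_comp_eq_comap hV hu
  rw [← hℱ]
  refine condExp_iSup_ae_eq_of_substitute ℱ (hℱ ▸ comap_negRowsNegOrN_le N)
    (measurable_negRows hX).comap_le (C := {A | ∃ t ∈ measurableCylinders _, negRows X ⁻¹' t = A})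
    ?_ (isPiSystem_measurableCylinders.comap _) hWi ?_
  · rw [← generateFrom_measurableCylinders, MeasurableSpace.comap_generateFrom]
    rfl
  rintro _ ⟨t, ht, rfl⟩ n
  obtain ⟨s, S, hS, rfl⟩ := (mem_measurableCylinders t).mp ht
  set Fn : Set NZ := F ∪ ⋃ k ∈ Set.Iic n, {negToNZ (u k).1, negOrN N (u k).2}
  have hFn : Fn.Finite := hF.union ((Set.finite_Iic n).biUnion fun _ _ => Set.toFinite _)
  have hFnN : Fn ⊆ range (negOrN N) := union_subset hFN (iUnion₂_subset fun k _ =>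
    insert_subset ⟨.inl _, rfl⟩ (singleton_subset_iff.mpr ⟨_, rfl⟩))
  obtain ⟨χ, hχm, hχ1, hχ⟩ := hexch.exists_substitute_indicator hX N hS hFn hFnN
  obtain ⟨Ψ, hΨ, hΨeq⟩ : ∃ Ψ : (Iic n → ℕ) → ℝ, StronglyMeasurable Ψ ∧
      P[fun ω => W fun p => X p.1 p.2 ω|ℱ n] =
        Ψ ∘ fun ω (k : Iic n) => negRowsNegOrN X N ω (u k) :=
    (stronglyMeasurable_condExp.mono
      (Filtration.natural_eq_comap (β := fun _ => ℕ) _ _ n).le).exists_eq_measurable_comp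
  refine ⟨χ, hℱ ▸ hχm, hχ1, hχ W hW (hWF.mono (prod_mono subset_union_left subset_union_left)), ?_⟩
  rw [hΨeq]
  refine hχ (fun a => Ψ fun k => a (negToNZ (u k).1, negOrN N (u k).2))
    (hΨ.measurable.comp (measurable_pi_lambda _ fun _ => measurable_pi_apply _))
    fun a b hab => congrArg Ψ (funext fun k => hab _ ⟨?_, ?_⟩)
  · exact mem_union_right _ (mem_biUnion k.2 (mem_insert _ _))
  · exact mem_union_right _ (mem_biUnion k.2 (mem_insert_of_mem _ rfl))

end ExchangeableArray

theorem subarray_condIndep_general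
    {Ω : Type*} [MeasurableSpace Ω] (P : Measure Ω) [IsProbabilityMeasure P]
    (X : NZ → NZ → Ω → ℕ) (hXmeas : ∀ i j, Measurable (X i j))
    -- exchangeability under finitely supported permutations of `ℤ ∖ {0}`
    (hexch : ∀ τ : Equiv.Perm NZ, {x | τ x ≠ x}.Finite →
      Measure.map (fun ω => fun p : NZ × NZ => X (τ p.1) (τ p.2) ω) P =
        Measure.map (fun ω => fun p : NZ × NZ => X p.1 p.2 ω) P)
    (N : Finset PosZ) :
    CondIndepPair
      -- the σ-algebra generated by `(X(i,j) : i < 0, j ∈ ℤ₋ ∪ N)`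
      (MeasurableSpace.comap
        (fun ω => fun p : NegZ × (NegZ ⊕ {x // x ∈ N}) =>
          X (negToNZ p.1) (Sum.elim negToNZ (fun x => posToNZ x.1) p.2) ω) inferInstance)
      -- `(X(i,j))_{i,j ∈ N}`
      (fun ω => fun p : {x // x ∈ N} × {x // x ∈ N} =>
        X (posToNZ p.1.1) (posToNZ p.2.1) ω)
      -- `(X(i,j) : i < 0, j ∈ ℤ₋ ∪ ℕ)`
      (fun ω => fun p : NegZ × NZ => X (negToNZ p.1) p.2 ω) P := by
  refine condIndepPair_of_condExp_eq (comap_negRowsNegOrN_le N)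
    (measurable_negRows hXmeas).comap_le (measurable_pi_lambda _ fun _ => hXmeas _ _)
    (comap_measurable _) fun g hg hgi => ?_
  exact IsExchangeableArray.condExp_comap_negRowsNegOrN_ae_eq hXmeas hexch N
    (W := fun a => g fun p => a (posToNZ p.1.1, posToNZ p.2.1))
    (finite_range fun x : {x // x ∈ N} => posToNZ x.1) (range_subset_iff.mpr fun x => ⟨.inr x, rfl⟩)
    (hg.comp (measurable_pi_lambda _ fun _ => measurable_pi_apply _))
    (fun a b h => congrArg g (funext fun p => h _ ⟨⟨p.1, rfl⟩, ⟨p.2, rfl⟩⟩)) hgi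

/-- For an exchangeable array indexed by `ℤ ∖ {0}` and a finite set `N ⊆ ℕ`, the
subarray `(X(i,j))_{i,j∈N}` and `(X(i,j) : i < 0, j ∈ ℤ₋ ∪ ℕ)` are conditionally
independent given the σ-algebra generated by `(X(i,j) : i < 0, j ∈ ℤ₋ ∪ N)`. -/
theorem subarray_condIndep
    {Ω : Type*} [MeasurableSpace Ω] (P : Measure Ω) [IsProbabilityMeasure P]
    (X : NZ → NZ → Ω → ℕ) (hXmeas : ∀ i j, Measurable (X i j))
    (hsymm : ∀ᵐ ω ∂P, ∀ i j, X i j ω = X j i ω)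
    (heven : ∀ᵐ ω ∂P, ∀ i, Even (X i i ω))
    -- exchangeability under finitely supported permutations of `ℤ ∖ {0}`
    (hexch : ∀ τ : Equiv.Perm NZ, {x | τ x ≠ x}.Finite →
      Measure.map (fun ω => fun p : NZ × NZ => X (τ p.1) (τ p.2) ω) P =
        Measure.map (fun ω => fun p : NZ × NZ => X p.1 p.2 ω) P)
    (N : Finset PosZ) :
    CondIndepPair
      -- the σ-algebra generated by `(X(i,j) : i < 0, j ∈ ℤ₋ ∪ N)`
      (MeasurableSpace.comap
        (fun ω => fun p : NegZ × (NegZ ⊕ {x // x ∈ N}) =>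
          X (negToNZ p.1) (Sum.elim negToNZ (fun x => posToNZ x.1) p.2) ω) inferInstance)
      -- `(X(i,j))_{i,j ∈ N}`
      (fun ω => fun p : {x // x ∈ N} × {x // x ∈ N} =>
        X (posToNZ p.1.1) (posToNZ p.2.1) ω)
      -- `(X(i,j) : i < 0, j ∈ ℤ₋ ∪ ℕ)`
      (fun ω => fun p : NegZ × NZ => X (negToNZ p.1) p.2 ω) P :=
  subarray_condIndep_general P X hXmeas hexch N
end

section
/- Let P be a vertex exchangeable probability measure on the space A_ℕ of symmetric ℕ₀-valued arrays indexed by ℕ×ℕ with even diagonal (equipped with the product σ-algebra). Then the σ-algebra of symmetric events S_∞ is P-trivial (every event in it has probability 0 or 1) if and only if the tail σ-algebra G_∞ is P-trivial. -/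
/-!
`G_n`-sets are invariant under relabelings fixing every vertex above `n`, so tail events are
symmetric. Conversely, a symmetric event `s` is approximated in measure by an event `t` depending
only on the entries with indices `≤ N`; the permutation swapping `{0, …, N}` with `{N+1, …, 2N+1}`
carries `t` into `G_N` without changing `P (s ∆ t)`, because `s` is symmetric and `P`
exchangeable. By Borel–Cantelli, `s` then agrees almost surely with a `G_∞`-event.
-/

open MeasureTheory

/-- `A_ℕ`: symmetric `ℕ₀`-valued arrays indexed by `ℕ × ℕ` with even diagonal,
equipped with the σ-algebra generated by the coordinates. -/
abbrev ArrSpace : Type := {A : ℕ → ℕ → ℕ // (∀ i j, A i j = A j i) ∧ ∀ i, Even (A i i)}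

/-- Relabeling of the vertices by a permutation `τ` of `ℕ`. -/
def relabel (τ : Equiv.Perm ℕ) (A : ArrSpace) : ArrSpace :=
  ⟨fun i j => A.1 (τ i) (τ j), fun i j => A.2.1 (τ i) (τ j), fun i => A.2.2 (τ i)⟩

/-- The σ-algebra `G_n` generated by the coordinates `A(i,j)` with `i,j > n`. -/
def tailAlg (n : ℕ) : MeasurableSpace ArrSpace :=
  MeasurableSpace.comap
    (fun A : ArrSpace => fun p : {p : ℕ × ℕ // n < p.1 ∧ n < p.2} => A.1 p.1.1 p.1.2)
    inferInstance

open Filter Set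
open scoped symmDiff ENNReal

namespace MeasureTheory

variable {Ω : Type*}

theorem isSetAlgebra_iUnion_measurableSet {m : ℕ → MeasurableSpace Ω} (hm : Monotone m) :
    IsSetAlgebra (⋃ n, {t | MeasurableSet[m n] t}) where
  empty_mem := mem_iUnion.2 ⟨0, @MeasurableSet.empty _ (m 0)⟩
  compl_mem s hs := by
    obtain ⟨n, hn⟩ := mem_iUnion.1 hs
    exact mem_iUnion.2 ⟨n, hn.compl⟩
  union_mem s t hs ht := by
    obtain ⟨n, hn⟩ := mem_iUnion.1 hs
    obtain ⟨k, hk⟩ := mem_iUnion.1 ht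
    exact mem_iUnion.2 ⟨max n k,
      (hm (le_max_left n k) _ hn).union (hm (le_max_right n k) _ hk)⟩

theorem exists_measurableSet_measure_symmDiff_lt_of_iSup_eq [mΩ : MeasurableSpace Ω]
    {m : ℕ → MeasurableSpace Ω} (hm : Monotone m) (hsup : ⨆ n, m n = mΩ)
    (μ : Measure Ω) [IsFiniteMeasure μ] {s : Set Ω} (hs : MeasurableSet s) {ε : ℝ}
    (hε : 0 < ε) : ∃ n t, MeasurableSet[m n] t ∧ μ (s ∆ t) < ENNReal.ofReal ε := by
  have hdense := Measure.MeasureDense.of_generateFrom_isSetAlgebra_finite μ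
    (isSetAlgebra_iUnion_measurableSet hm)
    ((MeasurableSpace.generateFrom_iUnion_measurableSet m).trans hsup).symm
  obtain ⟨t, ht, hst⟩ := hdense.approx s hs (measure_ne_top μ s) ε hε
  obtain ⟨n, hn⟩ := mem_iUnion.1 ht
  exact ⟨n, t, hn, hst⟩

/-- By Borel–Cantelli, approximations `uₙ ∈ mₙ` of `s` with summable errors converge to `s`
almost everywhere, so `s =ᵐ limsup uₙ`, and `limsup uₙ` lies in every `mₙ`. -/
theorem exists_ae_eq_forall_measurableSet_of_approx [MeasurableSpace Ω]
    {m : ℕ → MeasurableSpace Ω} (hm : Antitone m) {μ : Measure Ω} {s : Set Ω}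
    (happrox : ∀ n, ∀ ε : ℝ, 0 < ε → ∃ u, MeasurableSet[m n] u ∧ μ (s ∆ u) < ENNReal.ofReal ε) :
    ∃ t, (∀ n, MeasurableSet[m n] t) ∧ s =ᵐ[μ] t := by
  choose u hu hμu using fun n => happrox n ((1 / 2 : ℝ) ^ n) (by positivity)
  have hsum : ∑' n, μ (s ∆ u n) ≠ ∞ := by
    refine ne_top_of_le_ne_top ?_ (ENNReal.tsum_le_tsum fun n => (hμu n).le)
    rw [← ENNReal.ofReal_tsum_of_nonneg (fun n => by positivity) summable_geometric_two]
    exact ENNReal.ofReal_ne_top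
  refine ⟨limsup u atTop, fun n => ?_, ?_⟩
  · rw [← limsup_nat_add u n]
    exact @MeasurableSet.measurableSet_limsup _ (m n) _ fun k =>
      hm (Nat.le_add_left n k) _ (hu (k + n))
  · filter_upwards [ae_eventually_notMem hsum] with x hx
    have hmem : ∀ᶠ k in atTop, (x ∈ u k ↔ x ∈ s) :=
      hx.mono fun k hk => by rw [mem_symmDiff] at hk; tauto
    exact propext (mem_limsup_iff_frequently_mem.trans
      ((frequently_congr hmem).trans frequently_const)).symm

end MeasureTheory

theorem Equiv.Perm.exists_forall_lt_apply_eq {τ : Equiv.Perm ℕ} (hτ : {x | τ x ≠ x}.Finite) :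
    ∃ n, ∀ m, n < m → τ m = m := by
  obtain ⟨n, hn⟩ := hτ.bddAbove
  exact ⟨n, fun m hm => by_contra fun hne => (hn hne).not_gt hm⟩

namespace ArrSpace

theorem measurable_entry (i j : ℕ) : Measurable fun A : ArrSpace => A.1 i j :=
  (measurable_pi_apply j).comp ((measurable_pi_apply i).comp measurable_subtype_coe)

theorem measurable_relabel (τ : Equiv.Perm ℕ) : Measurable (relabel τ) :=
  (measurable_pi_iff.2 fun i => measurable_pi_iff.2 fun j =>
    measurable_entry (τ i) (τ j)).subtype_mk

def headAlg (n : ℕ) : MeasurableSpace ArrSpace :=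
  MeasurableSpace.comap
    (fun A : ArrSpace => fun p : {p : ℕ × ℕ // p.1 ≤ n ∧ p.2 ≤ n} => A.1 p.1.1 p.1.2)
    inferInstance

theorem comap_entries_le {ι : Type*} (p : ι → ℕ × ℕ) (m : MeasurableSpace ArrSpace)
    (h : ∀ q, Measurable[m] fun A : ArrSpace => A.1 (p q).1 (p q).2) :
    MeasurableSpace.comap (fun (A : ArrSpace) q => A.1 (p q).1 (p q).2) inferInstance ≤ m :=
  (@measurable_pi_lambda _ _ _ m _ _ h).comap_le

theorem measurable_entry_headAlg {n i j : ℕ} (hi : i ≤ n) (hj : j ≤ n) :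
    Measurable[headAlg n] fun A : ArrSpace => A.1 i j :=
  fun _ hB =>
    ⟨_, measurable_pi_apply (⟨(i, j), hi, hj⟩ : {p : ℕ × ℕ // p.1 ≤ n ∧ p.2 ≤ n}) hB, rfl⟩

theorem measurable_entry_tailAlg {n i j : ℕ} (hi : n < i) (hj : n < j) :
    Measurable[tailAlg n] fun A : ArrSpace => A.1 i j :=
  fun _ hB =>
    ⟨_, measurable_pi_apply (⟨(i, j), hi, hj⟩ : {p : ℕ × ℕ // n < p.1 ∧ n < p.2}) hB, rfl⟩

theorem headAlg_mono : Monotone headAlg := fun _ _ h =>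
  comap_entries_le _ _ fun q => measurable_entry_headAlg (q.2.1.trans h) (q.2.2.trans h)

theorem tailAlg_antitone : Antitone tailAlg := fun _ _ h =>
  comap_entries_le _ _ fun q => measurable_entry_tailAlg (h.trans_lt q.2.1) (h.trans_lt q.2.2)

theorem tailAlg_le (n : ℕ) : tailAlg n ≤ (inferInstance : MeasurableSpace ArrSpace) :=
  comap_entries_le _ _ fun q => measurable_entry q.1.1 q.1.2

theorem headAlg_le (n : ℕ) : headAlg n ≤ (inferInstance : MeasurableSpace ArrSpace) :=
  comap_entries_le _ _ fun q => measurable_entry q.1.1 q.1.2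

theorem iSup_headAlg : ⨆ n, headAlg n = (inferInstance : MeasurableSpace ArrSpace) := by
  refine le_antisymm (iSup_le headAlg_le) ?_
  refine Measurable.comap_le (@measurable_pi_lambda _ _ _ (⨆ n, headAlg n) _ _ fun i =>
    @measurable_pi_lambda _ _ _ (⨆ n, headAlg n) _ _ fun j => ?_)
  exact (measurable_entry_headAlg (le_max_left i j) (le_max_right i j)).mono
    (le_iSup headAlg _) le_rfl

theorem preimage_relabel_eq_of_measurableSet_tailAlg {n : ℕ} {s : Set ArrSpace}
    (hs : MeasurableSet[tailAlg n] s) {τ : Equiv.Perm ℕ} (hτ : ∀ m, n < m → τ m = m) :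
    relabel τ ⁻¹' s = s := by
  obtain ⟨B, -, rfl⟩ := hs
  refine congrArg (· ⁻¹' B) (funext fun A => funext fun p => ?_)
  simp only [relabel, hτ _ p.2.1, hτ _ p.2.2]

theorem measurableSet_tailAlg_preimage_relabel {n : ℕ} {s : Set ArrSpace}
    (hs : MeasurableSet[headAlg n] s) {σ : Equiv.Perm ℕ} (hσ : ∀ i ≤ n, n < σ i) :
    MeasurableSet[tailAlg n] (relabel σ ⁻¹' s) := by
  have : Measurable[tailAlg n, headAlg n] (relabel σ) :=
    measurable_iff_comap_le.2 <| MeasurableSpace.comap_comp.trans_le <|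
      comap_entries_le (fun q : {p : ℕ × ℕ // p.1 ≤ n ∧ p.2 ≤ n} => (σ q.1.1, σ q.1.2)) _
        fun q => measurable_entry_tailAlg (hσ _ q.2.1) (hσ _ q.2.2)
  exact this hs

/-- The involution exchanging `i` and `i + (n + 1)` for `i ≤ n`. -/
def shiftSwap (n : ℕ) : Equiv.Perm ℕ :=
  Function.Involutive.toPerm
    (fun i => if i ≤ n then i + (n + 1) else if i ≤ 2 * n + 1 then i - (n + 1) else i)
    (fun i => by dsimp only; split_ifs <;> omega)

theorem shiftSwap_apply_of_le {n i : ℕ} (hi : i ≤ n) : shiftSwap n i = i + (n + 1) :=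
  if_pos hi

theorem finite_shiftSwap_ne (n : ℕ) : {i | shiftSwap n i ≠ i}.Finite :=
  (Set.finite_Iic (2 * n + 1)).subset fun i hi => by
    by_contra hlt
    exact hi (show ite _ _ _ = i by simp only [Set.mem_Iic] at hlt; split_ifs <;> omega)

variable {P : Measure ArrSpace}

theorem measure_preimage_relabel
    (hexch : ∀ τ : Equiv.Perm ℕ, {x | τ x ≠ x}.Finite → Measure.map (relabel τ) P = P)
    {τ : Equiv.Perm ℕ} (hτ : {x | τ x ≠ x}.Finite) {s : Set ArrSpace} (hs : MeasurableSet s) :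
    P (relabel τ ⁻¹' s) = P s := by
  rw [← Measure.map_apply (measurable_relabel τ) hs, hexch τ hτ]

theorem exists_measurableSet_tailAlg_measure_symmDiff_lt [IsFiniteMeasure P]
    (hexch : ∀ τ : Equiv.Perm ℕ, {x | τ x ≠ x}.Finite → Measure.map (relabel τ) P = P)
    {s : Set ArrSpace} (hs : MeasurableSet s)
    (hinv : ∀ τ : Equiv.Perm ℕ, {x | τ x ≠ x}.Finite → relabel τ ⁻¹' s = s)
    (n : ℕ) {ε : ℝ} (hε : 0 < ε) :
    ∃ u, MeasurableSet[tailAlg n] u ∧ P (s ∆ u) < ENNReal.ofReal ε := by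
  obtain ⟨k, t, ht, hst⟩ :=
    exists_measurableSet_measure_symmDiff_lt_of_iSup_eq headAlg_mono iSup_headAlg P hs hε
  set N := max k n
  have htN : MeasurableSet[headAlg N] t := headAlg_mono (le_max_left k n) _ ht
  refine ⟨relabel (shiftSwap N) ⁻¹' t, tailAlg_antitone (le_max_right k n) _
    (measurableSet_tailAlg_preimage_relabel htN fun i hi => ?_), ?_⟩
  · rw [shiftSwap_apply_of_le hi]
    omega
  · have hsymm : s ∆ (relabel (shiftSwap N) ⁻¹' t) = relabel (shiftSwap N) ⁻¹' (s ∆ t) := by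
      rw [Set.preimage_symmDiff, hinv _ (finite_shiftSwap_ne N)]
    rwa [hsymm, measure_preimage_relabel hexch (finite_shiftSwap_ne N)
      (hs.symmDiff (headAlg_le N _ htN))]

end ArrSpace

/-- For a vertex exchangeable probability measure on `A_ℕ`, the σ-algebra of symmetric
events is trivial if and only if the tail σ-algebra is trivial. -/
theorem symmetric_trivial_iff_tail_trivial (P : Measure ArrSpace) [IsProbabilityMeasure P]
    -- vertex exchangeability
    (hexch : ∀ τ : Equiv.Perm ℕ, {x | τ x ≠ x}.Finite →
      Measure.map (relabel τ) P = P) :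
    -- `S_∞` is trivial: every measurable event invariant under all finitely supported
    -- relabelings has probability 0 or 1 ...
    ((∀ s : Set ArrSpace, MeasurableSet s →
        (∀ τ : Equiv.Perm ℕ, {x | τ x ≠ x}.Finite → relabel τ ⁻¹' s = s) →
        P s = 0 ∨ P s = 1)
      ↔
    -- ... if and only if `G_∞ = ⋂ₙ G_n` is trivial
    (∀ s : Set ArrSpace, (∀ n : ℕ, MeasurableSet[tailAlg n] s) →
        P s = 0 ∨ P s = 1)) := by
  open ArrSpace in
  constructor
  · intro hsym s hs
    refine hsym s (tailAlg_le 0 _ (hs 0)) fun τ hτ => ?_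
    obtain ⟨n, hn⟩ := τ.exists_forall_lt_apply_eq hτ
    exact preimage_relabel_eq_of_measurableSet_tailAlg (hs n) hn
  · intro htail s hs hinv
    obtain ⟨t, ht, hst⟩ := exists_ae_eq_forall_measurableSet_of_approx tailAlg_antitone
      (exists_measurableSet_tailAlg_measure_symmDiff_lt hexch hs hinv)
    rw [measure_congr hst]
    exact htail t ht
end
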